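/- arXiv:1804.02116 — 8 statements merged into one kernel-verified Lean document; each statement's English description precedes it below -/
import Mathlib

section
/- Let R be a Dedekind domain with field of fractions Q, and let B be a rank-1 torsion-free R-module (i.e. a nonzero R-submodule of Q). A finite rank torsion-free R-module A is generated by B (i.e. the image of the evaluation map Hom_R(B,A) ⊗_R B → A is all of A) if and only if for every nonzero a ∈ A there exists an injective R-module homomorphism from B into the pure submodule of A generated by a. -/
/-!
If `a` lies in the image of the evaluation map (the trace of `B`), some `g : B → A` hits a nonzero
multiple `r • a`; since `B` has rank one, `g` is injective and lands in `⟨a⟩_*`. Conversely,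
`⟨a⟩_*` is isomorphic to a submodule `J` of `Q`, and an embedding of `B` into it is multiplication
by some `γ ≠ 0`, so `γ ∈ J / B`. Over a Dedekind domain this forces `J = (J / B) * B`: locally at a
maximal ideal `P`, `B` is either generated by one element or is all of `Q`, and in both cases
every `x ∈ J` is, up to a unit at `P`, a product of an element of `J / B` and one of `B`. As
`(J / B) * B` is swept out by the multiplication maps `B → J`, the module `⟨a⟩_*`, and with it
`a`, is in the trace of `B`.
-/

open TensorProduct

/-- The pure submodule of `A` generated by `a`:
`⟨a⟩_* = {x ∈ A : r • x ∈ R a for some nonzero r ∈ R}`. -/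
def pureGen (R : Type*) {A : Type*} [CommRing R] [IsDomain R] [AddCommGroup A]
    [Module R A] (a : A) : Submodule R A where
  carrier := {x | ∃ r : R, r ≠ 0 ∧ ∃ s : R, r • x = s • a}
  zero_mem' := ⟨1, one_ne_zero, 0, by simp⟩
  add_mem' := by
    rintro x y ⟨r, hr, s, hx⟩ ⟨r', hr', s', hy⟩
    refine ⟨r * r', mul_ne_zero hr hr', r' * s + r * s', ?_⟩
    rw [smul_add, add_smul, mul_smul, mul_smul, mul_smul, smul_comm r r' x, hx, hy,
      smul_comm r' s a, smul_comm r s' a, smul_smul, smul_smul, mul_comm s' r]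
  smul_mem' := by
    rintro c x ⟨r, hr, s, hx⟩
    exact ⟨r, hr, c * s, by rw [smul_comm, hx, mul_smul]⟩

open Function Submodule

section Trace

variable (R : Type*) [CommRing R] (B M : Type*) [AddCommGroup B] [Module R B]
  [AddCommGroup M] [Module R M]

/-- The trace of `B` in `M`: `M` is `B`-generated iff it is `⊤`. -/
def traceSubmodule : Submodule R M :=
  ⨆ φ : B →ₗ[R] M, LinearMap.range φ

variable {R B M}

theorem range_lift_id_eq_traceSubmodule :
    LinearMap.range (TensorProduct.lift (LinearMap.id : (B →ₗ[R] M) →ₗ[R] (B →ₗ[R] M))) =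
      traceSubmodule R B M := by
  refine le_antisymm ?_ (iSup_le fun φ ↦ ?_)
  · rintro _ ⟨t, rfl⟩
    induction t using TensorProduct.induction_on with
    | zero => simp
    | tmul φ b => exact le_iSup (fun φ ↦ LinearMap.range φ) φ ⟨b, rfl⟩
    | add t₁ t₂ h₁ h₂ => rw [map_add]; exact add_mem h₁ h₂
  · rintro _ ⟨b, rfl⟩
    exact ⟨φ ⊗ₜ b, rfl⟩

theorem map_traceSubmodule_le {N : Type*} [AddCommGroup N] [Module R N] (g : M →ₗ[R] N) :
    (traceSubmodule R B M).map g ≤ traceSubmodule R B N := by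
  rw [traceSubmodule, Submodule.map_iSup]
  exact iSup_le fun φ ↦ LinearMap.range_comp φ g ▸ le_iSup (fun ψ ↦ LinearMap.range ψ) (g ∘ₗ φ)

end Trace

theorem traceSubmodule_eq_top_of_le_div_mul {R S : Type*} [CommRing R] [CommRing S] [Algebra R S]
    {B J : Submodule R S} (h : J ≤ J / B * B) : traceSubmodule R B J = ⊤ := by
  rw [eq_top_iff, ← map_le_map_iff_of_injective J.injective_subtype, map_subtype_top]
  refine h.trans (mul_le.mpr fun c hc b hb ↦ ?_)
  let φ : B →ₗ[R] J := ((LinearMap.mulLeft R c).domRestrict B).codRestrict J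
    fun b ↦ mem_div_iff_forall_mul_mem.mp hc b b.2
  exact ⟨φ ⟨b, hb⟩, mem_iSup_of_mem φ ⟨⟨b, hb⟩, rfl⟩, rfl⟩

theorem Submodule.mem_of_forall_exists_smul_mem {R M : Type*} [CommRing R] [AddCommGroup M]
    [Module R M] {N : Submodule R M} {x : M}
    (h : ∀ P : Ideal R, P.IsMaximal → ∃ s ∉ P, s • x ∈ N) : x ∈ N := by
  suffices N.colon {x} = ⊤ by simpa using (N.colon {x}).eq_top_iff_one.mp this
  by_contra hne
  obtain ⟨P, hP, hle⟩ := Ideal.exists_le_maximal _ hne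
  obtain ⟨s, hsP, hs⟩ := h P hP
  exact hsP (hle (mem_colon_singleton.mpr hs))

section Ideals

variable {R : Type*} [CommRing R]

theorem Ideal.exists_notMem_mul_mem_span_of_eq_mul {P C : Ideal R} {a b : R}
    (h : Ideal.span {b} = (Ideal.span {a} ⊔ Ideal.span {b}) * C) (hC : ¬ C ≤ P) :
    ∃ m ∉ P, m * a ∈ Ideal.span {b} := by
  obtain ⟨m, hmC, hmP⟩ := SetLike.not_le_iff_exists.mp hC
  refine ⟨m, hmP, h ▸ ?_⟩
  rw [mul_comm m]
  exact Ideal.mul_mem_mul (mem_sup_left (Ideal.mem_span_singleton_self a)) hmC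

variable [IsDedekindDomain R]

theorem Ideal.exists_notMem_mul_mem_span_or {P : Ideal R} (hP : P.IsPrime) (a : R) {b : R}
    (hb : b ≠ 0) : ∃ m ∉ P, m * a ∈ Ideal.span {b} ∨ m * b ∈ Ideal.span {a} := by
  set c := Ideal.span {a} ⊔ Ideal.span {b}
  have hc : c ≠ 0 := fun h ↦ hb <| by
    have hbc : b ∈ c := (le_sup_right : Ideal.span {b} ≤ c) (Ideal.mem_span_singleton_self b)
    simpa [h] using hbc
  obtain ⟨A', hA'⟩ := Ideal.dvd_iff_le.mpr (le_sup_left : Ideal.span {a} ≤ c)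
  obtain ⟨B', hB'⟩ := Ideal.dvd_iff_le.mpr (le_sup_right : Ideal.span {b} ≤ c)
  have hsup : A' ⊔ B' = ⊤ := mul_left_cancel₀ hc <| by
    rw [Ideal.mul_sup, ← hA', ← hB', Ideal.mul_top]
  by_cases hB'P : B' ≤ P
  · have hA'P : ¬ A' ≤ P := fun h ↦ hP.ne_top (top_le_iff.mp (hsup ▸ sup_le h hB'P))
    rw [sup_comm] at hA'
    obtain ⟨m, hmP, hm⟩ := Ideal.exists_notMem_mul_mem_span_of_eq_mul hA' hA'P
    exact ⟨m, hmP, Or.inr hm⟩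
  · obtain ⟨m, hmP, hm⟩ := Ideal.exists_notMem_mul_mem_span_of_eq_mul hB' hB'P
    exact ⟨m, hmP, Or.inl hm⟩

theorem Ideal.exists_notMem_mul_mem_span_of_notMem_mul {P i : Ideal R} {g : R} (hg : g ∈ i)
    (hgP : g ∉ i * P) {r : R} (hr : r ∈ i) : ∃ m ∉ P, m * r ∈ Ideal.span {g} := by
  set c := Ideal.span {r} ⊔ Ideal.span {g}
  obtain ⟨C, hC⟩ := Ideal.dvd_iff_le.mpr (le_sup_right : Ideal.span {g} ≤ c)
  refine Ideal.exists_notMem_mul_mem_span_of_eq_mul hC fun hCP ↦ hgP ?_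
  have hci : c ≤ i := sup_le ((Ideal.span_singleton_le_iff_mem i).mpr hr)
    ((Ideal.span_singleton_le_iff_mem i).mpr hg)
  exact (hC ▸ Ideal.mul_mono hci hCP) (Ideal.mem_span_singleton_self g)

-- `s` is taken in the part of the ideal `(u) : t` that is prime to `P`.
theorem Ideal.exists_notMem_forall_exists_mul_mem_span {P : Ideal R} (hP : P.IsMaximal)
    {u : R} (hu : u ≠ 0) (t : R) : ∃ s ∉ P, ∀ L : Ideal R, L.IsMaximal → L ≠ P →
      ∃ m ∉ L, m * (s * t) ∈ Ideal.span {u} := by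
  by_cases hP0 : P = ⊥
  · refine ⟨1, (Ideal.ne_top_iff_one P).mp hP.ne_top, fun L hL hLP ↦ ?_⟩
    exact absurd (hP.eq_of_le hL.ne_top (hP0 ▸ bot_le)).symm hLP
  set h := (Ideal.span {u}).colon {t}
  have hh : h ≠ 0 := fun h0 ↦ hu <| by
    have : u ∈ h :=
      mem_colon_singleton.mpr (Ideal.mul_mem_right t _ (Ideal.mem_span_singleton_self u))
    simpa [h0] using this
  obtain ⟨n, g, hgP, hfac⟩ :=
    WfDvdMonoid.max_power_factor hh (Ideal.prime_of_isPrime hP0 hP.isPrime).irreducible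
  obtain ⟨s, hsg, hsP⟩ := SetLike.not_le_iff_exists.mp fun hle ↦ hgP (Ideal.dvd_iff_le.mpr hle)
  refine ⟨s, hsP, fun L hL hLP ↦ ?_⟩
  have hPL : ¬ P ^ n ≤ L := fun hle ↦
    hLP (hP.eq_of_le hL.ne_top (hL.isPrime.le_of_pow_le hle)).symm
  obtain ⟨m, hmPn, hmL⟩ := SetLike.not_le_iff_exists.mp hPL
  refine ⟨m, hmL, ?_⟩
  have hms : m * s ∈ P ^ n * g := Ideal.mul_mem_mul hmPn hsg
  rw [← hfac] at hms
  rw [← mul_assoc]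
  exact mem_colon_singleton.mp hms

end Ideals

section FractionRing

variable {R : Type*} [CommRing R] [IsDomain R]

local notation "K" => FractionRing R

theorem exists_smul_eq_smul {B : Submodule R K} (x : B) {y : B} (hy : y ≠ 0) :
    ∃ s r : R, s ≠ 0 ∧ s • x = r • y := by
  obtain ⟨a, b, hb, hab⟩ := IsFractionRing.div_surjective R ((x : K) / y)
  have hy' : (y : K) ≠ 0 := by simpa using hy
  have hb' : algebraMap R K b ≠ 0 :=
    IsFractionRing.to_map_ne_zero_of_mem_nonZeroDivisors hb
  refine ⟨b, a, nonZeroDivisors.ne_zero hb, Subtype.ext ?_⟩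
  simp only [coe_smul, Algebra.smul_def]
  field_simp at hab
  linear_combination -hab

theorem LinearMap.apply_eq_div_mul {B : Submodule R K} (g : B →ₗ[R] K) {y : B} (hy : y ≠ 0)
    (x : B) : g x = g y / y * x := by
  obtain ⟨s, r, hs, h⟩ := exists_smul_eq_smul x hy
  have hy' : (y : K) ≠ 0 := by simpa using hy
  have hgs : s • g x = r • g y := by rw [← map_smul, h, map_smul]
  have hs' : s • (x : K) = r • (y : K) := congrArg Subtype.val h
  rw [Algebra.smul_def, Algebra.smul_def] at hgs hs'
  have hsK : algebraMap R K s ≠ 0 := (map_ne_zero_iff _ (IsFractionRing.injective R K)).mpr hs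
  apply mul_left_cancel₀ hsK
  rw [hgs]
  field_simp
  linear_combination -(g y) * hs'

variable {M : Type*} [AddCommGroup M] [Module R M]

theorem LinearMap.injective_of_apply_ne_zero [NoZeroSMulDivisors R M] {B : Submodule R K}
    (g : B →ₗ[R] M) {y : B} (hgy : g y ≠ 0) : Injective g := by
  rw [← LinearMap.ker_eq_bot, eq_bot_iff]
  intro x hx
  by_contra hx0
  obtain ⟨s, r, hs, h⟩ := exists_smul_eq_smul y hx0
  have : s • g y = 0 := by rw [← map_smul, h, map_smul, LinearMap.mem_ker.mp hx, smul_zero]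
  exact (smul_ne_zero hs hgy) this

theorem exists_smul_eq_apply_of_mem_traceSubmodule {B : Submodule R K} {y : B} (hy : y ≠ 0)
    {x : M} (hx : x ∈ traceSubmodule R B M) : ∃ g : B →ₗ[R] M, ∃ r : R, r ≠ 0 ∧ r • x = g y := by
  refine Submodule.iSup_induction _ (motive := fun x ↦ ∃ g : B →ₗ[R] M, ∃ r : R, r ≠ 0 ∧
    r • x = g y) hx ?_ ⟨0, 1, one_ne_zero, by simp⟩ ?_
  · rintro φ _ ⟨b, rfl⟩
    obtain ⟨s, r, hs, h⟩ := exists_smul_eq_smul b hy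
    exact ⟨r • φ, s, hs, by rw [← map_smul, h, map_smul, LinearMap.smul_apply]⟩
  · rintro x₁ x₂ h₁ h₂
    obtain ⟨g₁, r₁, hr₁, h₁⟩ := h₁
    obtain ⟨g₂, r₂, hr₂, h₂⟩ := h₂
    refine ⟨r₂ • g₁ + r₁ • g₂, r₁ * r₂, mul_ne_zero hr₁ hr₂, ?_⟩
    rw [smul_add, LinearMap.add_apply, LinearMap.smul_apply, LinearMap.smul_apply, ← h₁, ← h₂,
      smul_smul, smul_smul, mul_comm r₁ r₂]

theorem exists_injective_pureGen_of_mem_traceSubmodule [NoZeroSMulDivisors R M]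
    {B : Submodule R K} (hB : B ≠ ⊥) {a : M} (ha : a ≠ 0) (h : a ∈ traceSubmodule R B M) :
    ∃ f : B →ₗ[R] pureGen R a, Injective f := by
  obtain ⟨y, hyB, hy0⟩ := (Submodule.ne_bot_iff B).mp hB
  have hy : (⟨y, hyB⟩ : B) ≠ 0 := by simpa using hy0
  obtain ⟨g, r, hr, hg⟩ := exists_smul_eq_apply_of_mem_traceSubmodule hy h
  have hmem : ∀ x : B, g x ∈ pureGen R a := fun x ↦ by
    obtain ⟨s, t, hs, hst⟩ := exists_smul_eq_smul x hy
    exact ⟨s, hs, t * r, by rw [← map_smul, hst, map_smul, ← hg, smul_smul]⟩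
  have hinj := g.injective_of_apply_ne_zero (hg ▸ smul_ne_zero hr ha)
  exact ⟨g.codRestrict _ hmem, fun x₁ x₂ h ↦ hinj (congrArg Subtype.val h)⟩

end FractionRing

section PureGen

variable {R : Type*} [CommRing R] [IsDomain R] {A : Type*} [AddCommGroup A] [Module R A]
  [NoZeroSMulDivisors R A]

local notation "K" => FractionRing R

-- `⟨a⟩_*` lies on the line `K • a` of the `K`-vector space `LocalizedModule R⁰ A`.
theorem exists_linearEquiv_pureGen {a : A} (ha : a ≠ 0) :
    ∃ J : Submodule R K, Nonempty (pureGen R a ≃ₗ[R] J) := by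
  set ι := LocalizedModule.mkLinearMap (nonZeroDivisors R) A
  have hι : Injective ι := (IsLocalizedModule.injective_iff_isRegular (nonZeroDivisors R) ι).mpr
    fun c ↦ IsSMulRegular.of_ne_zero (nonZeroDivisors.coe_ne_zero c)
  set μ : K →ₗ[R] LocalizedModule (nonZeroDivisors R) A :=
    (LinearMap.toSpanSingleton K _ (ι a)).restrictScalars R
  have hμ : Injective μ := smul_left_injective K fun h ↦ ha (hι (h.trans (map_zero ι).symm))
  have hrange : ∀ x : pureGen R a, ι x ∈ LinearMap.range μ := by
    rintro ⟨x, r, hr, s, hx⟩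
    have hrK : algebraMap R K r ≠ 0 := (map_ne_zero_iff _ (IsFractionRing.injective R K)).mpr hr
    refine ⟨(algebraMap R K r)⁻¹ * algebraMap R K s, ?_⟩
    change ((algebraMap R K r)⁻¹ * algebraMap R K s) • ι a = ι x
    rw [mul_smul, algebraMap_smul, ← map_smul, ← hx, map_smul, ← algebraMap_smul K r (ι x),
      smul_smul, inv_mul_cancel₀ hrK, one_smul]
  set φ := (ι ∘ₗ (pureGen R a).subtype).codRestrict _ hrange
  have hφ : Injective φ := fun x₁ x₂ h ↦ Subtype.ext (hι (congrArg Subtype.val h))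
  set ψ := (LinearEquiv.ofInjective μ hμ).symm.toLinearMap ∘ₗ φ
  have hψ : Injective ψ := ((LinearEquiv.ofInjective μ hμ).symm.injective).comp hφ
  exact ⟨LinearMap.range ψ, ⟨LinearEquiv.ofInjective ψ hψ⟩⟩

end PureGen

section Dedekind

variable {R : Type*} [CommRing R] [IsDedekindDomain R]

local notation "K" => FractionRing R

theorem exists_notMem_smul_mem_span_or {P : Ideal R} (hP : P.IsPrime) (α : K) {β : K}
    (hβ : β ≠ 0) : ∃ m ∉ P, m • α ∈ R ∙ β ∨ m • β ∈ R ∙ α := by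
  obtain ⟨a, b, hb, hab⟩ := IsFractionRing.div_surjective R (α / β)
  have hbK : algebraMap R K b ≠ 0 := IsFractionRing.to_map_ne_zero_of_mem_nonZeroDivisors hb
  have hab' : algebraMap R K a * β = α * algebraMap R K b := by
    rw [div_eq_iff hbK] at hab
    rw [hab]
    field_simp
  obtain ⟨m, hmP, h | h⟩ := Ideal.exists_notMem_mul_mem_span_or hP a (nonZeroDivisors.ne_zero hb)
  all_goals
    obtain ⟨r, hr⟩ := Ideal.mem_span_singleton'.mp h
    have hrK := congrArg (algebraMap R K) hr
    simp only [map_mul] at hrK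
    refine ⟨m, hmP, ?_⟩
  · refine Or.inl (mem_span_singleton.mpr ⟨r, ?_⟩)
    rw [Algebra.smul_def, Algebra.smul_def]
    apply mul_left_cancel₀ hbK
    linear_combination β * hrK + algebraMap R K m * hab'
  · refine Or.inr (mem_span_singleton.mpr ⟨r, ?_⟩)
    rw [Algebra.smul_def, Algebra.smul_def]
    apply mul_left_cancel₀ hbK
    linear_combination β * hrK - algebraMap R K r * hab'

theorem exists_generator_or_forall_exists_smul_mem {P : Ideal R} (hP : P.IsMaximal)
    {B : Submodule R K} (hB : B ≠ ⊥) :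
    (∃ y ∈ B, y ≠ 0 ∧ ∀ u ∈ B, ∃ m ∉ P, m • u ∈ R ∙ y) ∨ ∀ w : K, ∃ m ∉ P, m • w ∈ B := by
  refine or_iff_not_imp_right.mpr fun hnot ↦ ?_
  push Not at hnot
  obtain ⟨w, hw⟩ := hnot
  have hw0 : w ≠ 0 := fun h ↦ hw 1 ((Ideal.ne_top_iff_one P).mp hP.ne_top) (by simp [h])
  have hspan : ∀ u ∈ B, ∃ m ∉ P, m • u ∈ R ∙ w := fun u hu ↦ by
    obtain ⟨m, hmP, h | h⟩ := exists_notMem_smul_mem_span_or hP.isPrime u hw0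
    · exact ⟨m, hmP, h⟩
    · exact absurd ((span_singleton_le_iff_mem _ _).mpr hu h) (hw m hmP)
  -- `i = B : w` is a nonzero ideal; an element of `i \ i * P` generates it at `P`.
  set i := B.colon {w}
  have hi : i ≠ 0 := by
    obtain ⟨y, hyB, hy0⟩ := (Submodule.ne_bot_iff B).mp hB
    obtain ⟨m, hmP, hmy⟩ := hspan y hyB
    obtain ⟨r, hr⟩ := mem_span_singleton.mp hmy
    have hm0 : m ≠ 0 := by rintro rfl; exact hmP P.zero_mem
    have hr0 : r ≠ 0 := by
      rintro rfl
      exact smul_ne_zero hm0 hy0 (by rw [← hr, zero_smul])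
    exact (Submodule.ne_bot_iff i).mpr ⟨r, mem_colon_singleton.mpr (hr ▸ B.smul_mem m hyB), hr0⟩
  have hlt : i * P < i := lt_of_le_of_ne Ideal.mul_le_left fun h ↦
    hP.ne_top (mul_left_cancel₀ hi (h.trans (Ideal.mul_top i).symm))
  obtain ⟨g, hg, hgP⟩ := SetLike.exists_of_lt hlt
  refine ⟨g • w, mem_colon_singleton.mp hg,
    smul_ne_zero (fun h ↦ hgP (h ▸ zero_mem _)) hw0, fun u hu ↦ ?_⟩
  obtain ⟨m₁, hm₁, hu'⟩ := hspan u hu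
  obtain ⟨r₁, hr₁⟩ := mem_span_singleton.mp hu'
  obtain ⟨m₂, hm₂, hr⟩ := Ideal.exists_notMem_mul_mem_span_of_notMem_mul hg hgP
    (mem_colon_singleton.mpr (hr₁ ▸ B.smul_mem m₁ hu) : r₁ ∈ i)
  obtain ⟨r₂, hr₂⟩ := Ideal.mem_span_singleton'.mp hr
  refine ⟨m₂ * m₁, hP.isPrime.mul_notMem hm₂ hm₁, mem_span_singleton.mpr ⟨r₂, ?_⟩⟩
  rw [smul_smul, hr₂, mul_smul, hr₁, smul_smul]

theorem exists_notMem_smul_mem_div_mul {P : Ideal R} (hP : P.IsMaximal) {B J : Submodule R K}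
    (hB : B ≠ ⊥) {q : K} (hq : q ∈ J / B) (hq0 : q ≠ 0) {x : K} (hx : x ∈ J) :
    ∃ s ∉ P, s • x ∈ J / B * B := by
  rcases exists_generator_or_forall_exists_smul_mem hP hB with ⟨y, hyB, hy0, hy⟩ | hK
  · -- `c = s x / y` lies in `J / B`: at `P` because `y` generates `B` there, and away from `P`
    -- because `s` clears the denominator of `x / (q y)`.
    obtain ⟨t, u, hu, htu⟩ := IsFractionRing.div_surjective R (x / (q * y))
    obtain ⟨s, hsP, hs⟩ :=
      Ideal.exists_notMem_forall_exists_mul_mem_span hP (nonZeroDivisors.ne_zero hu) t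
    set c := s • x / y
    have hcy : c * y = s • x := div_mul_cancel₀ _ hy0
    refine ⟨s, hsP, hcy ▸ mul_mem_mul ?_ hyB⟩
    refine mem_div_iff_forall_mul_mem.mpr fun v hv ↦ mem_of_forall_exists_smul_mem fun L hL ↦ ?_
    by_cases hLP : L = P
    · obtain ⟨m, hmP, hmv⟩ := hy v hv
      obtain ⟨r, hr⟩ := mem_span_singleton.mp hmv
      refine ⟨m, hLP ▸ hmP, ?_⟩
      rw [← mul_smul_comm, ← hr, mul_smul_comm, hcy]
      exact J.smul_mem r (J.smul_mem s hx)
    · obtain ⟨m, hmL, hm⟩ := hs L hL hLP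
      obtain ⟨r, hr⟩ := Ideal.mem_span_singleton'.mp hm
      refine ⟨m, hmL, ?_⟩
      have huK : algebraMap R K u ≠ 0 := IsFractionRing.to_map_ne_zero_of_mem_nonZeroDivisors hu
      have hrK := congrArg (algebraMap R K) hr
      simp only [map_mul] at hrK
      have htu' : algebraMap R K t * (q * y) = x * algebraMap R K u := by
        rw [div_eq_iff huK] at htu
        rw [htu]
        field_simp
      have hmc : m • (c * v) = r • (q * v) := by
        simp only [c, Algebra.smul_def]
        field_simp
        apply mul_left_cancel₀ huK
        linear_combination (-(algebraMap R K m * algebraMap R K s * v)) * htu' - (q * y * v) * hrK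
      rw [hmc]
      exact J.smul_mem r (mem_div_iff_forall_mul_mem.mp hq v hv)
  · obtain ⟨m, hmP, hm⟩ := hK (x / q)
    refine ⟨m, hmP, ?_⟩
    rw [← mul_div_cancel₀ x hq0, ← mul_smul_comm]
    exact mul_mem_mul hq hm

theorem le_div_mul_of_mem_div {B J : Submodule R K} (hB : B ≠ ⊥) {q : K} (hq : q ∈ J / B)
    (hq0 : q ≠ 0) : J ≤ J / B * B := fun _ hx ↦
  mem_of_forall_exists_smul_mem fun _ hP ↦ exists_notMem_smul_mem_div_mul hP hB hq hq0 hx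


theorem traceSubmodule_eq_top_of_injective {B J : Submodule R K} (hB : B ≠ ⊥) (f : B →ₗ[R] J)
    (hf : Injective f) : traceSubmodule R B J = ⊤ := by
  obtain ⟨y, hyB, hy0⟩ := (Submodule.ne_bot_iff B).mp hB
  have hy : (⟨y, hyB⟩ : B) ≠ 0 := by simpa using hy0
  set g := J.subtype ∘ₗ f
  have hγ : g ⟨y, hyB⟩ / y ∈ J / B := mem_div_iff_forall_mul_mem.mpr fun b hb ↦
    g.apply_eq_div_mul hy ⟨b, hb⟩ ▸ (f ⟨b, hb⟩).2
  have hgy : g ⟨y, hyB⟩ ≠ 0 := by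
    simpa [g] using hf.ne hy
  exact traceSubmodule_eq_top_of_le_div_mul (le_div_mul_of_mem_div hB hγ (div_ne_zero hgy hy0))

theorem mem_traceSubmodule_of_injective_pureGen {A : Type*} [AddCommGroup A] [Module R A]
    [NoZeroSMulDivisors R A] {B : Submodule R K} (hB : B ≠ ⊥) {a : A} (ha : a ≠ 0)
    (f : B →ₗ[R] pureGen R a) (hf : Injective f) : a ∈ traceSubmodule R B A := by
  obtain ⟨J, ⟨e⟩⟩ := exists_linearEquiv_pureGen (R := R) ha
  have hJ := traceSubmodule_eq_top_of_injective hB (e.toLinearMap ∘ₗ f) (e.injective.comp hf)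
  refine map_traceSubmodule_le ((pureGen R a).subtype ∘ₗ e.symm.toLinearMap) ?_
  rw [hJ]
  exact ⟨e ⟨a, 1, one_ne_zero, 1, rfl⟩, trivial, by simp⟩

end Dedekind

theorem stmt0_general (R : Type*) [CommRing R] [IsDedekindDomain R]
    (B : Submodule R (FractionRing R)) (hB : B ≠ ⊥)
    (A : Type*) [AddCommGroup A] [Module R A] [NoZeroSMulDivisors R A] :
    Function.Surjective
      (TensorProduct.lift (LinearMap.id : (B →ₗ[R] A) →ₗ[R] (B →ₗ[R] A)) :
        (B →ₗ[R] A) ⊗[R] B →ₗ[R] A)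
      ↔ ∀ a : A, a ≠ 0 → ∃ f : B →ₗ[R] (pureGen R a), Function.Injective f := by
  rw [← LinearMap.range_eq_top, range_lift_id_eq_traceSubmodule, eq_top_iff]
  refine ⟨fun h a ha ↦ exists_injective_pureGen_of_mem_traceSubmodule hB ha (h trivial),
    fun h a _ ↦ ?_⟩
  by_cases ha : a = 0
  · exact ha ▸ zero_mem _
  obtain ⟨f, hf⟩ := h a ha
  exact mem_traceSubmodule_of_injective_pureGen hB ha f hf

/-- Let `R` be a Dedekind domain with fraction field `Q` and `B` a
nonzero `R`-submodule of `Q` (a rank-1 torsion-free module).  A finite rank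
torsion-free `R`-module `A` is `B`-generated (the evaluation map
`Hom_R(B,A) ⊗_R B → A` is surjective) if and only if for every nonzero `a ∈ A`
there is an injective `R`-linear map from `B` into the pure submodule `⟨a⟩_*`. -/
theorem stmt0 (R : Type*) [CommRing R] [IsDomain R] [IsDedekindDomain R]
    (B : Submodule R (FractionRing R)) (hB : B ≠ ⊥)
    (A : Type*) [AddCommGroup A] [Module R A] [NoZeroSMulDivisors R A]
    (hfin : Module.rank R A < Cardinal.aleph0) :
    Function.Surjective
      (TensorProduct.lift (LinearMap.id : (B →ₗ[R] A) →ₗ[R] (B →ₗ[R] A)) :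
        (B →ₗ[R] A) ⊗[R] B →ₗ[R] A)
      ↔ ∀ a : A, a ≠ 0 → ∃ f : B →ₗ[R] (pureGen R a), Function.Injective f :=
  stmt0_general R B hB A
end

section
/- Let R be a Dedekind domain and let B, C be nonzero R-submodules of the fraction field Q of R. If there exists an injective R-module homomorphism B → C, then C is B-generated, i.e. the evaluation map Hom_R(B,C) ⊗_R B → C is surjective. -/
open TensorProduct

/-!
A linear map `B → K` is multiplication by a scalar, so the injection provides `q ≠ 0` with
`q B ⊆ C`, and the image of the evaluation map is `(C : B) B`. After replacing `B` by `q B` we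
may assume `0 ≠ B ⊆ C`. For `c ∈ C` the ideal `J = (B : c)` of `R` is nonzero, hence invertible,
so `c ∈ J⁻¹ J c ⊆ J⁻¹ B`; and `J⁻¹ B ⊆ B + R c ⊆ C`, which is checked on each `w ∈ B` by
inverting the fractional ideal `R w + R c`.
-/

open scoped nonZeroDivisors

section FractionField

variable {R K : Type*} [CommRing R] [IsDomain R] [Field K] [Algebra R K] [IsFractionRing R K]
  {B : Submodule R K}

theorem LinearMap.apply_mul_eq_apply_mul (f : B →ₗ[R] K) (b b' : B) :
    f b * b' = f b' * b := by
  obtain ⟨x, y, hy, hb⟩ := IsFractionRing.div_surjective (A := R) (b : K)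
  obtain ⟨x', y', hy', hb'⟩ := IsFractionRing.div_surjective (A := R) (b' : K)
  have hy0 : algebraMap R K y ≠ 0 := IsFractionRing.to_map_ne_zero_of_mem_nonZeroDivisors hy
  have hy0' : algebraMap R K y' ≠ 0 := IsFractionRing.to_map_ne_zero_of_mem_nonZeroDivisors hy'
  have hsmul : (y * x') • b = (y' * x) • b' := by
    ext
    simp only [SetLike.val_smul, Algebra.smul_def, map_mul, ← hb, ← hb']
    field_simp
  have := congrArg f hsmul
  simp only [map_smul, Algebra.smul_def, map_mul] at this
  rw [← hb, ← hb']
  field_simp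
  linear_combination this

theorem LinearMap.exists_apply_eq_mul (f : B →ₗ[R] K) : ∃ q : K, ∀ b : B, f b = q * b := by
  by_cases hB : B = ⊥
  · subst hB
    refine ⟨0, fun b => ?_⟩
    simp [Subsingleton.elim b 0]
  obtain ⟨b₀, hb₀, hb₀0⟩ := (Submodule.ne_bot_iff B).1 hB
  refine ⟨f ⟨b₀, hb₀⟩ / b₀, fun b => ?_⟩
  rw [div_mul_eq_mul_div, eq_div_iff hb₀0]
  exact f.apply_mul_eq_apply_mul b ⟨b₀, hb₀⟩

end FractionField

namespace Submodule

section Dedekind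

variable {R K : Type*} [CommRing R] [IsDedekindDomain R] [Field K] [Algebra R K]
  [IsFractionRing R K]

-- `u * w ∈ I = (I⁻¹)⁻¹` for `I = R w + R c`, because `w • I⁻¹` lies in `(R w : c)`.
theorem mul_mem_span_pair_of_forall_mem_colon {w c u : K} (hw : w ≠ 0)
    (hu : ∀ r ∈ (R ∙ w).colon {c}, u * algebraMap R K r ∈ (1 : FractionalIdeal R⁰ K)) :
    u * w ∈ span R {w, c} := by
  set I : FractionalIdeal R⁰ K :=
    FractionalIdeal.spanSingleton R⁰ w ⊔ FractionalIdeal.spanSingleton R⁰ c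
  have hI : I ≠ 0 := ne_bot_of_le_ne_bot
    (FractionalIdeal.spanSingleton_ne_zero_iff.2 hw) le_sup_left
  have hIspan : (I : Submodule R K) = span R {w, c} := by
    rw [FractionalIdeal.coe_sup, FractionalIdeal.coe_spanSingleton,
      FractionalIdeal.coe_spanSingleton, ← span_union, Set.singleton_union]
  rw [← hIspan, FractionalIdeal.mem_coe, ← inv_inv I,
    FractionalIdeal.mem_inv_iff (inv_ne_zero hI)]
  intro v hv
  have hvI := (FractionalIdeal.mem_inv_iff hI).1 hv
  obtain ⟨r, hr⟩ := (FractionalIdeal.mem_one_iff R⁰).1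
    (hvI w (le_sup_left (a := FractionalIdeal.spanSingleton R⁰ w)
      (FractionalIdeal.mem_spanSingleton_self R⁰ w)))
  obtain ⟨s, hs⟩ := (FractionalIdeal.mem_one_iff R⁰).1
    (hvI c (le_sup_right (a := FractionalIdeal.spanSingleton R⁰ w)
      (FractionalIdeal.mem_spanSingleton_self R⁰ c)))
  have hrc : r ∈ (R ∙ w).colon {c} := by
    have : r • c = s • w := by rw [Algebra.smul_def, Algebra.smul_def, hr, hs]; ring
    rw [mem_colon_singleton, this]
    exact smul_mem _ s (mem_span_singleton_self w)
  have := hu r hrc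
  rwa [hr, ← mul_assoc, mul_right_comm] at this

theorem colon_singleton_ne_bot {B : Submodule R K} (hB : B ≠ ⊥) (c : K) :
    B.colon {c} ≠ ⊥ := by
  obtain ⟨w, hwB, hw⟩ := (Submodule.ne_bot_iff B).1 hB
  obtain ⟨x, y, hy, hxy⟩ := IsFractionRing.div_surjective (A := R) (c / w)
  have hy0 : algebraMap R K y ≠ 0 := IsFractionRing.to_map_ne_zero_of_mem_nonZeroDivisors hy
  have hyc : y • c = x • w := by
    rw [div_eq_div_iff hy0 hw] at hxy
    rw [Algebra.smul_def, Algebra.smul_def]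
    linear_combination -hxy
  refine (Submodule.ne_bot_iff _).2 ⟨y, mem_colon_singleton.2 ?_, nonZeroDivisors.ne_zero hy⟩
  rw [hyc]
  exact B.smul_mem x hwB

theorem le_div_mul_of_le {B C : Submodule R K} (hB : B ≠ ⊥) (hBC : B ≤ C) :
    C ≤ C / B * B := by
  intro c hc
  set J : FractionalIdeal R⁰ K := ((B.colon {c} : Ideal R) : FractionalIdeal R⁰ K)
  have hJ : J * J⁻¹ = 1 :=
    mul_inv_cancel₀ (FractionalIdeal.coeIdeal_ne_zero.2 (colon_singleton_ne_bot hB c))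
  have hJc : (J : Submodule R K) * (R ∙ c) ≤ B := by
    rw [mul_le]
    intro z hz v hv
    obtain ⟨r, hr, rfl⟩ := (FractionalIdeal.mem_coeIdeal R⁰).1 hz
    obtain ⟨s, rfl⟩ := mem_span_singleton.1 hv
    rw [← Algebra.smul_def, smul_comm]
    exact B.smul_mem s (mem_colon_singleton.1 hr)
  have hcJB : c ∈ ((J⁻¹ : FractionalIdeal R⁰ K) : Submodule R K) * B := by
    have h1 : (1 : K) ∈ (J * J⁻¹ : FractionalIdeal R⁰ K) := by
      rw [hJ]; exact FractionalIdeal.one_mem_one R⁰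
    have := mul_mem_mul h1 (mem_span_singleton_self (R := R) c)
    rw [one_mul, FractionalIdeal.coe_mul, mul_comm (J : Submodule R K), mul_assoc] at this
    exact mul_le_mul_right hJc _ this
  refine mul_le_mul_left (fun u hu => ?_) B hcJB
  rw [mem_div_iff_forall_mul_mem]
  intro w hw
  rcases eq_or_ne w 0 with rfl | hw0
  · rw [mul_zero]; exact C.zero_mem
  refine span_le.2 (Set.insert_subset (hBC hw) (Set.singleton_subset_iff.2 hc))
    (mul_mem_span_pair_of_forall_mem_colon hw0 fun r hr => ?_)
  have hrJ : algebraMap R K r ∈ J := FractionalIdeal.mem_coeIdeal_of_mem R⁰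
    (colon_mono ((span_singleton_le_iff_mem w B).2 hw) le_rfl hr)
  rw [← hJ, mul_comm]
  exact FractionalIdeal.mul_mem_mul hu hrJ

theorem le_div_mul_of_mem_div {B C : Submodule R K} (hB : B ≠ ⊥) {q : K} (hq0 : q ≠ 0)
    (hq : q ∈ C / B) : C ≤ C / B * B := by
  have hqB : (R ∙ q) * B ≠ ⊥ := by
    obtain ⟨b, hb, hb0⟩ := (Submodule.ne_bot_iff B).1 hB
    exact (Submodule.ne_bot_iff _).2
      ⟨q * b, mul_mem_mul (mem_span_singleton_self q) hb, mul_ne_zero hq0 hb0⟩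
  have hqC : (R ∙ q) * B ≤ C := by
    rw [← le_div_iff_mul_le, span_singleton_le_iff_mem]
    exact hq
  calc C ≤ C / ((R ∙ q) * B) * ((R ∙ q) * B) := le_div_mul_of_le hqB hqC
    _ = C / ((R ∙ q) * B) * (R ∙ q) * B := (mul_assoc _ _ _).symm
    _ ≤ C / B * B := by
      gcongr
      rw [le_div_iff_mul_le, mul_assoc, ← le_div_iff_mul_le]

end Dedekind

theorem div_mul_le_map_range_lift {R A : Type*} [CommRing R] [CommRing A] [Algebra R A]
    (B C : Submodule R A) :
    C / B * B ≤ (LinearMap.range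
      (TensorProduct.lift (LinearMap.id : (B →ₗ[R] C) →ₗ[R] (B →ₗ[R] C)))).map C.subtype := by
  rw [mul_le]
  intro q hq b hb
  let φ : B →ₗ[R] C := (LinearMap.mulLeft R q).restrict hq
  exact ⟨φ ⟨b, hb⟩, ⟨φ ⊗ₜ ⟨b, hb⟩, by simp⟩, rfl⟩

end Submodule

theorem stmt1_general (R : Type*) [CommRing R] [IsDedekindDomain R]
    (B C : Submodule R (FractionRing R)) (hB : B ≠ ⊥)
    (hinj : ∃ f : B →ₗ[R] C, Function.Injective f) :
    Function.Surjective
      (TensorProduct.lift (LinearMap.id : (B →ₗ[R] C) →ₗ[R] (B →ₗ[R] C)) :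
        (B →ₗ[R] C) ⊗[R] B →ₗ[R] C) := by
  obtain ⟨f, hf⟩ := hinj
  obtain ⟨q, hq⟩ := (C.subtype ∘ₗ f).exists_apply_eq_mul
  have hq0 : q ≠ 0 := by
    rintro rfl
    obtain ⟨b, hb, hb0⟩ := (Submodule.ne_bot_iff B).1 hB
    have : f ⟨b, hb⟩ = f 0 := Subtype.ext (by simpa using hq ⟨b, hb⟩)
    exact hb0 (congrArg Subtype.val (hf this))
  have hqB : q ∈ C / B := fun b hb => hq ⟨b, hb⟩ ▸ (f ⟨b, hb⟩).2
  intro c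
  obtain ⟨_, ⟨t, rfl⟩, ht⟩ :=
    Submodule.div_mul_le_map_range_lift B C (Submodule.le_div_mul_of_mem_div hB hq0 hqB c.2)
  exact ⟨t, Subtype.ext ht⟩

/-- Over a Dedekind domain `R`, if `B` and `C` are nonzero
`R`-submodules of the fraction field and there is an injective `R`-linear map
`B → C`, then the evaluation map `Hom_R(B,C) ⊗_R B → C` is surjective, i.e. `C`
is `B`-generated. -/
theorem stmt1 (R : Type*) [CommRing R] [IsDomain R] [IsDedekindDomain R]
    (B C : Submodule R (FractionRing R)) (hB : B ≠ ⊥) (hC : C ≠ ⊥)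
    (hinj : ∃ f : B →ₗ[R] C, Function.Injective f) :
    Function.Surjective
      (TensorProduct.lift (LinearMap.id : (B →ₗ[R] C) →ₗ[R] (B →ₗ[R] C)) :
        (B →ₗ[R] C) ⊗[R] B →ₗ[R] C) :=
  stmt1_general R B C hB hinj
end

section
/- Let R be a Dedekind domain, p a nonzero prime ideal of R, and let B ≤ C be nonzero R-submodules of the fraction field Q. Then the localization at p of the evaluation map Hom_R(B,C) ⊗_R B → C is surjective. -/
/-!
Multiplication identifies `Hom_R(B, C)` with `{q ∈ Q | q • B ⊆ C}`, so for `c ∈ C` it is enough to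
find `s ∉ p`, `b₀ ∈ B` and such a `q` with `q * b₀ = s • c`. Take `q = s • (c / b₀)`, with `s ∉ p`
chosen so that `p ^ e • q ⊆ R`. For `b ∈ B` the ideal `{r | r • (q * b) ∈ C}` then contains `p ^ e`
(as `B ≤ C`), so it is all of `R` as soon as it contains an element outside `p`, i.e. as soon as
`q * b ∈ C` holds locally at `p`. For that, `b₀` is chosen according to the `p`-adic valuations
on `B`: if they are bounded, `b₀` attains their maximum and `v (q * b) ≤ v c`; if they are
unbounded, any `b₀` works, since `v (q * b) ≤ v u` for some `u ∈ B ⊆ C`.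
-/

open TensorProduct

open IsDedekindDomain
open scoped WithZero

theorem Submodule.mem_of_pow_smul_mem_of_smul_mem {R M : Type*} [CommRing R] [AddCommGroup M]
    [Module R M] {p : Ideal R} [hp : p.IsMaximal] {N : Submodule R M} {z : M} {e : ℕ}
    (hpow : ∀ t ∈ p ^ e, t • z ∈ N) {t : R} (ht : t ∉ p) (htz : t • z ∈ N) : z ∈ N := by
  let I : Ideal R := N.comap (LinearMap.toSpanSingleton R M z)
  have hsup : Ideal.span {t} ⊔ p = ⊤ :=
    (hp.out.ne_iff_eq_top le_sup_right).mp fun h ↦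
      ht (h ▸ Ideal.mem_sup_left (Ideal.mem_span_singleton_self t))
  have hI : I = ⊤ := by
    refine top_le_iff.mp ((Ideal.sup_pow_eq_top' hsup).symm.le.trans (sup_le ?_ hpow))
    exact (Ideal.span_singleton_le_iff_mem I).mpr htz
  simpa [I] using (Submodule.eq_top_iff'.mp hI) 1

theorem WithZero.exists_max_image_or_forall_exists_le {α : Type*} (f : α → ℤᵐ⁰) {S : Set α}
    {x : α} (hx : x ∈ S) (hfx : f x ≠ 0) :
    (∃ y ∈ S, f y ≠ 0 ∧ ∀ z ∈ S, f z ≤ f y) ∨ ∀ γ : ℤᵐ⁰, ∃ y ∈ S, γ ≤ f y := by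
  by_contra! h
  obtain ⟨hmax, γ, hγ⟩ := h
  obtain ⟨n, ⟨y, hyS, hy⟩, hn⟩ := Int.exists_greatest_of_bdd (P := fun n ↦ ∃ y ∈ S, f y = exp n)
    ⟨log γ, fun n ⟨y, hyS, hy⟩ ↦ le_log_of_exp_le (hy ▸ (hγ y hyS).le)⟩
    ⟨log (f x), x, hx, (exp_log hfx).symm⟩
  obtain ⟨z, hzS, hz⟩ := hmax y hyS (hy ▸ exp_ne_zero)
  have hz0 : f z ≠ 0 := ne_bot_of_gt hz
  have := hn (log (f z)) ⟨z, hzS, (exp_log hz0).symm⟩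
  rw [← exp_le_exp, exp_log hz0, ← hy] at this
  exact this.not_gt hz

namespace IsDedekindDomain.HeightOneSpectrum

variable {R K : Type*} [CommRing R] [IsDedekindDomain R] [Field K] [Algebra R K]
  [IsFractionRing R K] (v : HeightOneSpectrum R)

theorem exists_notMem_forall_pow_mul_mem {I : Ideal R} (hI : I ≠ ⊥) :
    ∃ s ∉ v.asIdeal, ∃ e : ℕ, ∀ t ∈ v.asIdeal ^ e, t * s ∈ I := by
  obtain ⟨e, J, hvJ, rfl⟩ := WfDvdMonoid.max_power_factor hI v.irreducible
  obtain ⟨s, hsJ, hsv⟩ := SetLike.not_le_iff_exists.mp fun h ↦ hvJ (Ideal.dvd_iff_le.mpr h)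
  exact ⟨s, hsv, e, fun t ht ↦ Ideal.mul_mem_mul ht hsJ⟩

theorem exists_notMem_forall_pow_smul_mem_one (x : K) :
    ∃ s ∉ v.asIdeal, ∃ e : ℕ, ∀ t ∈ v.asIdeal ^ e, t • s • x ∈ (1 : Submodule R K) := by
  let I : Ideal R := (1 : Submodule R K).comap (LinearMap.toSpanSingleton R K x)
  have hI : I ≠ ⊥ := by
    obtain ⟨d, r, hr⟩ := IsLocalization.exists_integer_multiple (nonZeroDivisors R) x
    exact (Submodule.ne_bot_iff I).mpr
      ⟨d, Submodule.mem_one.mpr ⟨r, hr⟩, nonZeroDivisors.coe_ne_zero d⟩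
  obtain ⟨s, hsv, e, hs⟩ := v.exists_notMem_forall_pow_mul_mem hI
  exact ⟨s, hsv, e, fun t ht ↦ by simpa [I, mul_smul] using hs t ht⟩

theorem exists_notMem_smul_mem_of_valuation_le {N : Submodule R K} {u z : K} (hu : u ∈ N)
    (hzu : v.valuation K z ≤ v.valuation K u) : ∃ t ∉ v.asIdeal, t • z ∈ N := by
  rcases eq_or_ne u 0 with rfl | hu0
  · refine ⟨1, fun h ↦ v.isPrime.ne_top ((Ideal.eq_top_iff_one _).mpr h), ?_⟩
    simp_all
  have hle : v.valuation K (z / u) ≤ 1 := by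
    rw [map_div₀]
    exact div_le_one_of_le₀ hzu zero_le
  obtain ⟨n, d, hnd⟩ := v.exists_primeCompl_mul_eq_of_integer (z / u) hle
  refine ⟨d, d.2, ?_⟩
  have hdz : (d : R) • z = n • u := by
    rw [Algebra.smul_def, Algebra.smul_def, ← hnd]
    field_simp
  rw [hdz]
  exact N.smul_mem n hu

theorem exists_forall_exists_valuation_div_mul_le {B C : Submodule R K} (hB : B ≠ ⊥)
    (hBC : B ≤ C) {c : K} (hc : c ∈ C) :
    ∃ b₀ ∈ B, b₀ ≠ 0 ∧ ∀ b ∈ B, ∃ u ∈ C, v.valuation K (c / b₀ * b) ≤ v.valuation K u := by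
  obtain ⟨x, hxB, hx0⟩ := (Submodule.ne_bot_iff B).mp hB
  rcases WithZero.exists_max_image_or_forall_exists_le (v.valuation K) hxB (by simpa using hx0) with
    ⟨b₀, hb₀, hb₀0, hmax⟩ | hunbdd
  · refine ⟨b₀, hb₀, by simpa using hb₀0, fun b hb ↦ ⟨c, hc, ?_⟩⟩
    rw [map_mul, map_div₀, div_mul_eq_mul_div, div_le_iff₀ (zero_lt_iff.mpr hb₀0)]
    gcongr
    exact hmax b hb
  · exact ⟨x, hxB, hx0, fun b _ ↦ (hunbdd _).imp fun u ⟨huB, hu⟩ ↦ ⟨hBC huB, hu⟩⟩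

theorem exists_forall_mul_mem_and_mul_eq_smul {B C : Submodule R K} (hB : B ≠ ⊥)
    (hBC : B ≤ C) {c : K} (hc : c ∈ C) :
    ∃ s ∉ v.asIdeal, ∃ q : K, (∀ b ∈ B, q * b ∈ C) ∧ ∃ b₀ ∈ B, q * b₀ = s • c := by
  obtain ⟨b₀, hb₀, hb₀0, hloc⟩ := v.exists_forall_exists_valuation_div_mul_le hB hBC hc
  obtain ⟨s, hsv, e, hs⟩ := v.exists_notMem_forall_pow_smul_mem_one (c / b₀)
  refine ⟨s, hsv, s • (c / b₀), fun b hb ↦ ?_, b₀, hb₀, by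
    rw [smul_mul_assoc, div_mul_cancel₀ _ hb₀0]⟩
  obtain ⟨u, huC, hu⟩ := hloc b hb
  obtain ⟨t, htv, ht⟩ := v.exists_notMem_smul_mem_of_valuation_le (z := s • (c / b₀) * b) huC
    (by rwa [smul_mul_assoc, Algebra.smul_def, map_mul, (v.valuation_eq_one_iff_notMem).mpr hsv,
      one_mul])
  refine Submodule.mem_of_pow_smul_mem_of_smul_mem (e := e) (fun π hπ ↦ ?_) htv ht
  obtain ⟨r, hr⟩ := Submodule.mem_one.mp (hs π hπ)
  rw [← smul_mul_assoc, ← hr, ← Algebra.smul_def]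
  exact hBC (B.smul_mem r hb)

end IsDedekindDomain.HeightOneSpectrum

theorem stmt2_general (R : Type*) [CommRing R] [IsDedekindDomain R]
    (p : Ideal R) [hp : p.IsPrime] (hp0 : p ≠ ⊥)
    (B C : Submodule R (FractionRing R)) (hB : B ≠ ⊥) (hBC : B ≤ C) :
    Function.Surjective
      (LocalizedModule.map p.primeCompl
        (TensorProduct.lift (LinearMap.id : (B →ₗ[R] C) →ₗ[R] (B →ₗ[R] C)) :
          (B →ₗ[R] C) ⊗[R] B →ₗ[R] C)) := by
  intro z
  induction z using LocalizedModule.induction_on with | _ c σ => ?_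
  obtain ⟨s, hsp, q, hqBC, b₀, hb₀, hqb₀⟩ :=
    HeightOneSpectrum.exists_forall_mul_mem_and_mul_eq_smul ⟨p, hp, hp0⟩ hB hBC c.2
  let f : B →ₗ[R] C := (LinearMap.mulLeft R q).restrict hqBC
  refine ⟨LocalizedModule.mk (f ⊗ₜ ⟨b₀, hb₀⟩) (⟨s, hsp⟩ * σ), ?_⟩
  have hf : f ⟨b₀, hb₀⟩ = (⟨s, hsp⟩ : p.primeCompl) • c := Subtype.ext hqb₀
  rw [LocalizedModule.map_mk, TensorProduct.lift.tmul, LinearMap.id_apply, hf,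
    LocalizedModule.mk_cancel_common_left]

/-- Let `R` be a Dedekind domain, `p` a nonzero prime ideal and
`B ≤ C` nonzero `R`-submodules of the fraction field `Q`.  Then the localization
at `p` of the evaluation map `Hom_R(B,C) ⊗_R B → C` is surjective. -/
theorem stmt2 (R : Type*) [CommRing R] [IsDomain R] [IsDedekindDomain R]
    (p : Ideal R) [hp : p.IsPrime] (hp0 : p ≠ ⊥)
    (B C : Submodule R (FractionRing R)) (hB : B ≠ ⊥) (hC : C ≠ ⊥) (hBC : B ≤ C) :
    Function.Surjective
      (LocalizedModule.map p.primeCompl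
        (TensorProduct.lift (LinearMap.id : (B →ₗ[R] C) →ₗ[R] (B →ₗ[R] C)) :
          (B →ₗ[R] C) ⊗[R] B →ₗ[R] C)) :=
  stmt2_general R p (hp := hp) hp0 B C hB hBC
end

section
/- Let A be a finite rank torsion-free module over a Dedekind domain R. If A is a self-pure-generator (every pure submodule of A is A-generated), then every pure rank-1 submodule of A is A-generated. Conversely, if A has a direct summand B of rank 1 such that type(B) = IT(A), then A is a self-pure-generator. -/
open TensorProduct

universe u

/-- A submodule `K ≤ A` is pure iff `A ⧸ K` is torsion-free, i.e.
`r • x ∈ K` with `r ≠ 0` implies `x ∈ K`. -/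
def IsPureSubmodule (R : Type*) {A : Type*} [CommRing R] [AddCommGroup A]
    [Module R A] (K : Submodule R A) : Prop :=
  ∀ (r : R) (x : A), r ≠ 0 → r • x ∈ K → x ∈ K

/-- `K` is `A`-generated: some direct sum of copies of `A` surjects onto `K`. -/
def ModGenerated (R : Type*) {A : Type u} [CommRing R] [AddCommGroup A]
    [Module R A] (K : Submodule R A) : Prop :=
  ∃ (ι : Type u) (f : (ι →₀ A) →ₗ[R] K), Function.Surjective f

/-- `A` is a self-pure-generator: every pure submodule of `A` is `A`-generated. -/
def SelfPureGenerator (R : Type*) (A : Type u) [CommRing R] [AddCommGroup A]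
    [Module R A] : Prop :=
  ∀ K : Submodule R A, IsPureSubmodule R K → ModGenerated R K

/-!
For `x ≠ 0` in a pure submodule `N`, the pure submodule `⟨x⟩_*` lies in `N` and receives an
embedding of the summand `B`; maps `B → ⟨x⟩_*` extend to `A` through the projection onto `B`.
So it suffices that a rank-one module `P` is generated by any nonzero `B` embedded in it.
Inside the fraction field `K` this is the identity `(P : B) B = P` for submodules `0 ≠ B ≤ P`
of `K`. For `c ∈ P` put `J = {x ∈ R | x c ∈ B}`. Inverting the fractional ideal `Rb + Rc`
shows `b ∈ J (Rb + Rc) ⊆ J P` for every `b ∈ B`, so `J⁻¹ B ⊆ P`; and `c ∈ J⁻¹ J c ⊆ J⁻¹ B`.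
-/

open Submodule nonZeroDivisors in
theorem Submodule.div_mul_cancel_of_le {R K : Type*} [CommRing R] [IsDedekindDomain R]
    [Field K] [Algebra R K] [IsFractionRing R K] {B P : Submodule R K} (hB : B ≠ ⊥)
    (hBP : B ≤ P) : P / B * B = P := by
  refine le_antisymm (le_div_iff_mul_le.mp le_rfl) fun c hc => ?_
  have exists_inv_mul : ∀ I : FractionalIdeal R⁰ K, I ≠ 0 → ∃ N : Submodule R K, N * I = 1 :=
    fun I hI => ⟨_, by
      rw [← FractionalIdeal.coe_mul, inv_mul_cancel₀ hI, FractionalIdeal.coe_one]⟩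
  let J : FractionalIdeal R⁰ K :=
    ⟨1 ⊓ B / span R {c}, FractionalIdeal.isFractional_of_le_one _ inf_le_left⟩
  have hbJ : ∀ b ∈ B, span R {b} ≤ J * span R {b, c} := by
    intro b hb
    rcases eq_or_ne b 0 with rfl | hb0
    · simp
    let M : FractionalIdeal R⁰ K :=
      ⟨span R {b, c}, FractionalIdeal.isFractional_of_fg (fg_span (Set.toFinite _))⟩
    have hbM : span R {b} ≤ M := span_mono (by simp)
    have hcM : span R {c} ≤ M := span_mono (by simp)
    have hM0 : M ≠ 0 := fun h => hb0 <| by simpa [h] using hbM (mem_span_singleton_self b)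
    obtain ⟨N, hN⟩ := exists_inv_mul M hM0
    have hbN : span R {b} * N ≤ J := by
      refine le_inf ?_ (le_div_iff_mul_le.mpr ?_)
      · calc span R {b} * N ≤ M * N := mul_le_mul' hbM le_rfl
          _ = 1 := by rw [mul_comm, hN]
      · calc span R {b} * N * span R {c} = N * span R {c} * span R {b} := by ring
          _ ≤ N * M * B :=
            mul_le_mul' (mul_le_mul' le_rfl hcM) ((span_singleton_le_iff_mem _ _).mpr hb)
          _ = B := by rw [hN, one_mul]
    calc span R {b} = span R {b} * N * M := by rw [mul_assoc, hN, mul_one]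
      _ ≤ J * M := mul_le_mul' hbN le_rfl
  have hJ0 : J ≠ 0 := by
    obtain ⟨b, hb, hb0⟩ := exists_mem_ne_zero_of_ne_bot hB
    exact fun h => hb0 (by simpa [h] using hbJ b hb (mem_span_singleton_self b))
  obtain ⟨N, hN⟩ := exists_inv_mul J hJ0
  have hNB : N ≤ P / B := le_div_iff_mul_le.mpr <| mul_le.mpr fun y hy b hb => by
    have : N * span R {b} ≤ P :=
      calc N * span R {b} ≤ N * (J * span R {b, c}) := mul_le_mul' le_rfl (hbJ b hb)
        _ = span R {b, c} := by rw [← mul_assoc, hN, one_mul]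
        _ ≤ P := span_le.mpr (Set.insert_subset (hBP hb) (Set.singleton_subset_iff.mpr hc))
    exact this (mul_mem_mul hy (mem_span_singleton_self b))
  have hcNB : span R {c} ≤ N * B :=
    calc span R {c} = N * (J * span R {c}) := by rw [← mul_assoc, hN, one_mul]
      _ ≤ N * B := mul_le_mul' le_rfl (le_div_iff_mul_le.mp inf_le_right)
  exact mul_le_mul' hNB le_rfl (hcNB (mem_span_singleton_self c))

section PureGen

variable {R : Type*} [CommRing R] [IsDomain R] {A : Type*} [AddCommGroup A] [Module R A]

theorem self_mem_pureGen (a : A) : a ∈ pureGen R a := ⟨1, one_ne_zero, 1, rfl⟩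

theorem isPureSubmodule_pureGen (a : A) : IsPureSubmodule R (pureGen R a) :=
  fun r _ hr ⟨r', hr', s, hs⟩ => ⟨r' * r, mul_ne_zero hr' hr, s, by rw [mul_smul, hs]⟩

theorem IsPureSubmodule.pureGen_le {N : Submodule R A} (hN : IsPureSubmodule R N) {a : A}
    (ha : a ∈ N) : pureGen R a ≤ N :=
  fun _ ⟨r, hr, s, hs⟩ => hN r _ hr (hs ▸ N.smul_mem s ha)

variable [NoZeroSMulDivisors R A] (K : Type*) [Field K] [Algebra R K] [IsFractionRing R K]

theorem exists_injective_pureGen_toField {c : A} (hc : c ≠ 0) :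
    ∃ ε : pureGen R c →ₗ[R] K, Function.Injective ε := by
  have hK : ∀ {r : R}, r ≠ 0 → algebraMap R K r ≠ 0 := fun hr =>
    (map_ne_zero_iff _ (IsFractionRing.injective R K)).mpr hr
  have ratio_eq : ∀ {p : A} {r s r' s' : R}, r ≠ 0 → r' ≠ 0 → r • p = s • c → r' • p = s' • c →
      algebraMap R K s / algebraMap R K r = algebraMap R K s' / algebraMap R K r' := by
    intro p r s r' s' hr hr' h h'
    have : (s * r') • c = (s' * r) • c := by
      rw [mul_comm, mul_smul, ← h, mul_comm, mul_smul, ← h', smul_comm]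
    rw [div_eq_div_iff (hK hr) (hK hr'), ← map_mul, ← map_mul, smul_left_injective R hc this]
  choose r hr s hs using fun p : pureGen R c => p.2
  have spec : ∀ (p : pureGen R c) {r' s' : R}, r' ≠ 0 → r' • (p : A) = s' • c →
      algebraMap R K (s p) / algebraMap R K (r p) = algebraMap R K s' / algebraMap R K r' :=
    fun p _ _ hr' h => ratio_eq (hr p) hr' (hs p) h
  refine ⟨{ toFun := fun p => algebraMap R K (s p) / algebraMap R K (r p),
            map_add' := fun p q => ?_, map_smul' := fun t p => ?_ }, ?_⟩
  · rw [spec (p + q) (mul_ne_zero (hr p) (hr q)) (s' := r q * s p + r p * s q),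
      div_add_div _ _ (hK (hr p)) (hK (hr q))]
    · simp only [map_add, map_mul]; ring
    · rw [Submodule.coe_add]; linear_combination (norm := module) r q • hs p + r p • hs q
  · rw [spec (t • p) (hr p) (s' := t * s p)]
    · simp only [map_mul, RingHom.id_apply, Algebra.smul_def]; ring
    · rw [Submodule.coe_smul]; linear_combination (norm := module) t • hs p
  · refine (injective_iff_map_eq_zero _).mpr fun p hp => Subtype.ext ?_
    have hsp : s p = 0 := by simpa [hK (hr p)] using hp
    have := hs p
    rw [hsp, zero_smul] at this
    exact (smul_eq_zero.mp this).resolve_left (hr p)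

end PureGen

section Trace

variable {R : Type*} [CommRing R] {B P : Type*} [AddCommGroup B] [Module R B]
  [AddCommGroup P] [Module R P]

theorem iSup_range_eq_top_of_injective [IsDedekindDomain R] (K : Type*) [Field K]
    [Algebra R K] [IsFractionRing R K] [Nontrivial B] {f : B →ₗ[R] P}
    (hf : Function.Injective f) {ε : P →ₗ[R] K}
    (hε : Function.Injective ε) : ⨆ g : B →ₗ[R] P, LinearMap.range g = ⊤ := by
  set T := ⨆ g : B →ₗ[R] P, LinearMap.range g
  have hB : LinearMap.range (ε ∘ₗ f) ≠ ⊥ := by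
    obtain ⟨β, hβ⟩ := exists_ne (0 : B)
    exact fun h => hβ (hε.comp hf <| by
      simpa using LinearMap.congr_fun (LinearMap.range_eq_bot.mp h) β)
  have hle : LinearMap.range ε ≤ T.map ε := by
    rw [← Submodule.div_mul_cancel_of_le hB (LinearMap.range_comp_le_range f ε)]
    refine Submodule.mul_le.mpr fun q hq _ ⟨β, hβ⟩ => ?_
    have hqε : ∀ γ, (LinearMap.mulLeft R q ∘ₗ ε ∘ₗ f) γ ∈ LinearMap.range ε := fun γ =>
      Submodule.mem_div_iff_forall_mul_mem.mp hq _ ⟨γ, rfl⟩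
    let g := (LinearEquiv.ofInjective ε hε).symm.toLinearMap ∘ₗ
      (LinearMap.mulLeft R q ∘ₗ ε ∘ₗ f).codRestrict _ hqε
    refine ⟨g β, le_iSup (fun g : B →ₗ[R] P => LinearMap.range g) g ⟨β, rfl⟩, ?_⟩
    rw [← hβ]
    exact LinearEquiv.ofInjective_symm_apply (h := hε) ε _
  refine eq_top_iff.mpr fun p _ => ?_
  obtain ⟨t, ht, htp⟩ := hle ⟨p, rfl⟩
  exact hε htp ▸ ht

end Trace

section Generation

variable {R : Type*} [CommRing R]

theorem modGenerated_of_iSup_range_eq_top {A : Type u} [AddCommGroup A] [Module R A]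
    {N : Submodule R A} (h : ⨆ φ : A →ₗ[R] N, LinearMap.range φ = ⊤) : ModGenerated R N := by
  refine ⟨A →ₗ[R] N, Finsupp.lsum ℕ id, LinearMap.range_eq_top.mp (eq_top_iff.mpr ?_)⟩
  refine h ▸ iSup_le fun φ => ?_
  rintro _ ⟨a, rfl⟩
  exact ⟨Finsupp.single φ a, by simp⟩

theorem map_iSup_range_le_iSup_range {A B P N : Type*} [AddCommGroup A] [Module R A]
    [AddCommGroup B] [Module R B] [AddCommGroup P] [Module R P] [AddCommGroup N] [Module R N]
    {π : A →ₗ[R] B} (hπ : Function.Surjective π) (ι : P →ₗ[R] N) :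
    (⨆ g : B →ₗ[R] P, LinearMap.range g).map ι ≤ ⨆ φ : A →ₗ[R] N, LinearMap.range φ := by
  rw [Submodule.map_iSup]
  refine iSup_le fun g => ?_
  rw [← LinearMap.range_comp,
    ← LinearMap.range_comp_of_range_eq_top (ι ∘ₗ g) (LinearMap.range_eq_top.mpr hπ)]
  exact le_iSup (fun φ : A →ₗ[R] N => LinearMap.range φ) _

end Generation

theorem stmt5_general (R : Type*) [CommRing R] [IsDedekindDomain R]
    (A : Type u) [AddCommGroup A] [Module R A] [NoZeroSMulDivisors R A] :
    (SelfPureGenerator R A → ∀ a : A, a ≠ 0 → ModGenerated R (pureGen R a)) ∧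
    ((∃ B C : Submodule R A, IsCompl B C ∧ Module.rank R B = 1 ∧
        ∀ a : A, a ≠ 0 → ∃ f : B →ₗ[R] (pureGen R a), Function.Injective f) →
      SelfPureGenerator R A) := by
  refine ⟨fun hA a _ => hA _ (isPureSubmodule_pureGen a), ?_⟩
  rintro ⟨B, C, hBC, hB, hemb⟩ N hN
  have : Nontrivial B := rank_pos_iff_nontrivial.mp (hB ▸ zero_lt_one)
  refine modGenerated_of_iSup_range_eq_top (eq_top_iff.mpr fun ⟨x, hx⟩ _ => ?_)
  rcases eq_or_ne x 0 with rfl | hx0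
  · exact zero_mem _
  obtain ⟨f, hf⟩ := hemb x hx0
  obtain ⟨ε, hε⟩ := exists_injective_pureGen_toField (R := R) (FractionRing R) hx0
  have htop := iSup_range_eq_top_of_injective (FractionRing R) hf hε
  exact map_iSup_range_le_iSup_range (Submodule.projectionOnto_surjective hBC)
    (Submodule.inclusion (hN.pureGen_le hx))
    ⟨⟨x, self_mem_pureGen x⟩, htop ▸ Submodule.mem_top, rfl⟩

/-- Let `A` be a finite rank torsion-free module over a Dedekind
domain.  (i) If `A` is a self-pure-generator then every pure rank-1 submodule
`⟨a⟩_*` (for `a ≠ 0`) is `A`-generated.  (ii) Conversely, if `A` has a direct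
summand `B` of rank `1` with `type(B) = IT(A)` (since `B` is a summand this is
equivalent to: `B` embeds into `⟨a⟩_*` for every nonzero `a`), then `A` is a
self-pure-generator. -/
theorem stmt5 (R : Type*) [CommRing R] [IsDomain R] [IsDedekindDomain R]
    (A : Type u) [AddCommGroup A] [Module R A] [NoZeroSMulDivisors R A]
    (hfin : Module.rank R A < Cardinal.aleph0) :
    (SelfPureGenerator R A → ∀ a : A, a ≠ 0 → ModGenerated R (pureGen R a)) ∧
    ((∃ B C : Submodule R A, IsCompl B C ∧ Module.rank R B = 1 ∧
        ∀ a : A, a ≠ 0 → ∃ f : B →ₗ[R] (pureGen R a), Function.Injective f) →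
      SelfPureGenerator R A) :=
  stmt5_general R A
end

section
/- Let A be a finite rank torsion-free module over a Dedekind domain. Then IT(A^n) = IT(A) for every positive integer n, where IT denotes the inner type. -/
/-!
A nonzero submodule `D` of the fraction field is the pure hull `⟨d₀⟩_*` of any nonzero
`d₀ ∈ D`, so `D` embeds into `⟨a⟩_*` exactly when some linear map `D → A` sends `d₀` to a nonzero
multiple of `a`. For a constant tuple `(a, …, a)` one projects to a coordinate. Conversely, from
maps `fᵢ` with `fᵢ d₀ = sᵢ • xᵢ` the tuple of the maps `(∏_{j ≠ i} sⱼ) • fᵢ` sends `d₀` to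
`(∏ⱼ sⱼ) • x`.
-/

open TensorProduct

section PureGen

variable {R M N : Type*} [CommRing R] [IsDomain R] [AddCommGroup M] [Module R M]
  [AddCommGroup N] [Module R N]

theorem mem_pureGen_self (a : M) : a ∈ pureGen R a :=
  ⟨1, one_ne_zero, 1, rfl⟩

theorem pureGen_le_of_mem {x y : M} (hy : y ∈ pureGen R x) : pureGen R y ≤ pureGen R x := by
  rintro z ⟨r, hr, s, hz⟩
  obtain ⟨r', hr', s', hy⟩ := hy
  refine ⟨r' * r, mul_ne_zero hr' hr, s * s', ?_⟩
  rw [mul_smul, hz, smul_comm, hy, smul_smul]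

theorem LinearMap.map_mem_pureGen (f : M →ₗ[R] N) {m y : M} (hy : y ∈ pureGen R m) :
    f y ∈ pureGen R (f m) := by
  obtain ⟨r, hr, s, hy⟩ := hy
  exact ⟨r, hr, s, by rw [← map_smul, hy, map_smul]⟩

variable [Module.IsTorsionFree R M] [Module.IsTorsionFree R N]

theorem LinearMap.injective_of_pureGen_eq_top {d₀ : M} (htop : pureGen R d₀ = ⊤)
    (f : M →ₗ[R] N) (hf : f d₀ ≠ 0) : Function.Injective f := by
  refine LinearMap.ker_eq_bot.mp (LinearMap.ker_eq_bot'.mpr fun d hd => ?_)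
  obtain ⟨q, hq, p, hqp⟩ : d ∈ pureGen R d₀ := htop ▸ Submodule.mem_top
  have hp : p = 0 := by
    have h := congrArg f hqp
    rw [map_smul, map_smul, hd, smul_zero, eq_comm, smul_eq_zero] at h
    exact h.resolve_right hf
  simpa [hp, hq] using hqp

theorem exists_injective_pureGen_iff {d₀ : M} (htop : pureGen R d₀ = ⊤) (hd₀ : d₀ ≠ 0)
    {a : N} (ha : a ≠ 0) :
    (∃ f : M →ₗ[R] pureGen R a, Function.Injective f) ↔
      ∃ f : M →ₗ[R] N, ∃ s : R, s ≠ 0 ∧ f d₀ = s • a := by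
  constructor
  · rintro ⟨f, hf⟩
    obtain ⟨r, hr, s, hrs⟩ := (f d₀).2
    have hfd₀ : (f d₀ : N) ≠ 0 := by
      simpa using (map_ne_zero_iff f hf).mpr hd₀
    refine ⟨r • (pureGen R a).subtype ∘ₗ f, s, ?_, hrs⟩
    rintro rfl
    exact smul_ne_zero hr hfd₀ (by rw [hrs, zero_smul])
  · rintro ⟨f, s, hs, hfs⟩
    have hmem (d : M) : f d ∈ pureGen R a := by
      refine pureGen_le_of_mem ?_ (f.map_mem_pureGen (htop ▸ Submodule.mem_top : d ∈ pureGen R d₀))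
      exact hfs ▸ Submodule.smul_mem _ s (mem_pureGen_self a)
    refine ⟨f.codRestrict (pureGen R a) hmem, ?_⟩
    refine LinearMap.injective_of_pureGen_eq_top htop _ fun h => ?_
    exact smul_ne_zero hs ha (hfs ▸ congrArg Subtype.val h)

end PureGen

theorem pureGen_eq_top_of_ne_zero {R K : Type*} [CommRing R] [IsDomain R] [Field K] [Algebra R K]
    [IsFractionRing R K] {D : Submodule R K} {d₀ : D} (hd₀ : d₀ ≠ 0) : pureGen R d₀ = ⊤ := by
  refine eq_top_iff.mpr fun d _ => ?_
  obtain ⟨p, q, hq, hpq⟩ := IsFractionRing.div_surjective R (d : K)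
  obtain ⟨u, v, hv, huv⟩ := IsFractionRing.div_surjective R (d₀ : K)
  have hu : u ≠ 0 := by
    rintro rfl
    exact hd₀ (Subtype.ext (by simpa using huv.symm))
  have hqK := IsFractionRing.to_map_ne_zero_of_mem_nonZeroDivisors (K := K) hq
  have hvK := IsFractionRing.to_map_ne_zero_of_mem_nonZeroDivisors (K := K) hv
  refine ⟨q * u, mul_ne_zero (nonZeroDivisors.ne_zero hq) hu, p * v, Subtype.ext ?_⟩
  simp only [Submodule.coe_smul, Algebra.smul_def, ← hpq, ← huv, map_mul]
  field_simp

theorem exists_pi_map_eq_smul {R D ι : Type*} [CommRing R] [IsDomain R] [AddCommGroup D]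
    [Module R D] [Fintype ι] [DecidableEq ι] {M : ι → Type*} [∀ i, AddCommGroup (M i)]
    [∀ i, Module R (M i)] (d₀ : D) (x : ∀ i, M i)
    (h : ∀ i, ∃ f : D →ₗ[R] M i, ∃ s : R, s ≠ 0 ∧ f d₀ = s • x i) :
    ∃ f : D →ₗ[R] (∀ i, M i), ∃ s : R, s ≠ 0 ∧ f d₀ = s • x := by
  choose f s hs hf using h
  refine ⟨LinearMap.pi fun i => (∏ j ∈ Finset.univ.erase i, s j) • f i, ∏ j, s j,
    Finset.prod_ne_zero_iff.mpr fun j _ => hs j, funext fun i => ?_⟩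
  simp only [LinearMap.pi_apply, LinearMap.smul_apply, hf, smul_smul, Pi.smul_apply,
    mul_comm _ (s i), Finset.mul_prod_erase _ _ (Finset.mem_univ i)]

/-- Types are compared through their rank-one lower bounds: `D` lies below the type of every
nonzero element of `A^n` iff it lies below the type of every nonzero element of `A`. -/
theorem stmt8_general (R : Type*) [CommRing R] [IsDomain R]
    (A : Type*) [AddCommGroup A] [Module R A] [NoZeroSMulDivisors R A]
    (n : ℕ) (hn : 0 < n)
    (D : Submodule R (FractionRing R)) (hD : D ≠ ⊥) :
    (∀ x : Fin n → A, x ≠ 0 → ∃ f : D →ₗ[R] (pureGen R x), Function.Injective f) ↔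
      (∀ a : A, a ≠ 0 → ∃ f : D →ₗ[R] (pureGen R a), Function.Injective f) := by
  obtain ⟨d, hdD, hd⟩ := (Submodule.ne_bot_iff D).mp hD
  have hd₀ : (⟨d, hdD⟩ : D) ≠ 0 := by simpa [Subtype.ext_iff] using hd
  have htop := pureGen_eq_top_of_ne_zero hd₀
  have hiff {N : Type _} [AddCommGroup N] [Module R N] [Module.IsTorsionFree R N] {a : N}
      (ha : a ≠ 0) := exists_injective_pureGen_iff htop hd₀ ha
  refine ⟨fun h a ha => ?_, fun h x hx => ?_⟩
  · have hconst : (fun _ => a : Fin n → A) ≠ 0 := fun h0 => ha (congrFun h0 ⟨0, hn⟩)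
    obtain ⟨f, s, hs, hf⟩ := (hiff hconst).mp (h _ hconst)
    exact (hiff ha).mpr ⟨LinearMap.proj ⟨0, hn⟩ ∘ₗ f, s, hs, by simp [hf]⟩
  · refine (hiff hx).mpr (exists_pi_map_eq_smul _ x fun i => ?_)
    by_cases hi : x i = 0
    · exact ⟨0, 1, one_ne_zero, by simp [hi]⟩
    · exact (hiff hi).mp (h _ hi)

/-- For a finite rank torsion-free module `A` over a Dedekind
domain, `IT(A^n) = IT(A)` for every positive integer `n`.  Encoded: a rank-1
module `D` (nonzero submodule of the fraction field) is a lower bound for the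
types of the nonzero elements of `A^n` iff it is one for `A`; two types are
equal iff they have the same rank-1 lower bounds. -/
theorem stmt8 (R : Type*) [CommRing R] [IsDomain R] [IsDedekindDomain R]
    (A : Type*) [AddCommGroup A] [Module R A] [NoZeroSMulDivisors R A]
    (hfin : Module.rank R A < Cardinal.aleph0) (n : ℕ) (hn : 0 < n)
    (D : Submodule R (FractionRing R)) (hD : D ≠ ⊥) :
    (∀ x : Fin n → A, x ≠ 0 → ∃ f : D →ₗ[R] (pureGen R x), Function.Injective f) ↔
      (∀ a : A, a ≠ 0 → ∃ f : D →ₗ[R] (pureGen R a), Function.Injective f) :=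
  stmt8_general R A n hn D hD
end

section
/- For a nonzero element a of a finite rank torsion-free module A over a Dedekind domain, IT(A) ≤ type(a), i.e. the inner type of A is a lower bound for the type of every nonzero element. -/
open TensorProduct

section

variable {R A : Type*} [CommRing R] [IsDomain R] [AddCommGroup A] [Module R A]

theorem IsFractionRing.exists_smul_eq_smul {K : Type*} [Field K] [Algebra R K]
    [IsFractionRing R K] (t t₀ : K) (ht₀ : t₀ ≠ 0) :
    ∃ d c : R, d ≠ 0 ∧ d • t = c • t₀ := by
  obtain ⟨⟨c, d⟩, h⟩ := IsLocalization.surj (nonZeroDivisors R) (t / t₀)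
  refine ⟨d, c, nonZeroDivisors.coe_ne_zero d, ?_⟩
  rw [Algebra.smul_def, Algebra.smul_def, ← h]
  field_simp

theorem mem_pureGen_of_smul_mem {a y : A} {d : R} (hd : d ≠ 0)
    (h : d • y ∈ pureGen R a) : y ∈ pureGen R a := by
  obtain ⟨r, hr, s, hrs⟩ := h
  exact ⟨r * d, mul_ne_zero hr hd, s, by rw [mul_smul, hrs]⟩

theorem exists_smul_eq_smul_of_mem_pureGen [NoZeroSMulDivisors R A] {b y : A}
    (hy : y ∈ pureGen R b) (hy₀ : y ≠ 0) : ∃ σ : R, σ ≠ 0 ∧ ∃ ρ : R, σ • b = ρ • y := by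
  obtain ⟨ρ, hρ, σ, h⟩ := hy
  refine ⟨σ, ?_, ρ, h.symm⟩
  rintro rfl
  exact smul_ne_zero hρ hy₀ (h.trans (zero_smul R b))

section FractionRing

variable {K : Type*} [Field K] [Algebra R K] [IsFractionRing R K] {T : Submodule R K}

theorem LinearMap.apply_mem_pureGen (F : T →ₗ[R] A) {t₀ : T} (ht₀ : t₀ ≠ 0) {a : A}
    (h : F t₀ ∈ pureGen R a) (t : T) : F t ∈ pureGen R a := by
  obtain ⟨d, c, hd, hdc⟩ :=
    IsFractionRing.exists_smul_eq_smul (R := R) (t : K) t₀ (by simpa using ht₀)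
  refine mem_pureGen_of_smul_mem hd ?_
  rw [← map_smul, show d • t = c • t₀ from Subtype.ext hdc, map_smul]
  exact (pureGen R a).smul_mem c h

theorem LinearMap.injective_of_apply_ne_zero_s9 [NoZeroSMulDivisors R A] (F : T →ₗ[R] A)
    {t₀ : T} (h : F t₀ ≠ 0) : Function.Injective F := by
  have ht₀ : (t₀ : K) ≠ 0 := by
    rintro h₀
    rw [show t₀ = 0 from Subtype.ext h₀, map_zero] at h
    exact h rfl
  refine (injective_iff_map_eq_zero F).mpr fun t ht ↦ ?_
  obtain ⟨d, c, hd, hdc⟩ := IsFractionRing.exists_smul_eq_smul (R := R) (t : K) t₀ ht₀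
  have hc : c = 0 := by
    have : c • F t₀ = 0 := by
      rw [← map_smul, ← show d • t = c • t₀ from Subtype.ext hdc, map_smul, ht, smul_zero]
    exact (smul_eq_zero.mp this).resolve_right h
  rw [hc, zero_smul] at hdc
  exact Subtype.ext ((smul_eq_zero.mp hdc).resolve_left hd)

end FractionRing

theorem exists_linearMap_apply_eq_smul [NoZeroSMulDivisors R A] {M : Type*}
    [AddCommGroup M] [Module R M] {t₀ : M} (ht₀ : t₀ ≠ 0) {ι : Type*} (x : ι → A)
    (hx : ∀ i, ∃ f : M →ₗ[R] pureGen R (x i), Function.Injective f)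
    {a : A} (ha : ∃ r : R, r ≠ 0 ∧ r • a ∈ Submodule.span R (Set.range x)) :
    ∃ F : M →ₗ[R] A, ∃ m : R, m ≠ 0 ∧ F t₀ = m • a := by
  set E := LinearMap.range (LinearMap.applyₗ (R := R) (M₂ := A) t₀)
  set P := (Submodule.torsion R (A ⧸ E)).comap E.mkQ
  have hP : ∀ {y : A} {σ : R}, σ ≠ 0 → σ • y ∈ E → y ∈ P := fun hσ hy ↦
    (Submodule.mem_torsion_iff _).mpr ⟨⟨_, mem_nonZeroDivisors_of_ne_zero hσ⟩,
      (Submodule.Quotient.mk_eq_zero E).mpr hy⟩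
  have hxP : ∀ i, x i ∈ P := fun i ↦ by
    obtain ⟨f, hf⟩ := hx i
    have hf₀ : (f t₀ : A) ≠ 0 := fun h₀ ↦ ht₀ (hf ((Subtype.ext h₀).trans (map_zero f).symm))
    obtain ⟨σ, hσ, ρ, h⟩ := exists_smul_eq_smul_of_mem_pureGen (f t₀).2 hf₀
    exact hP hσ (h ▸ E.smul_mem ρ ⟨(pureGen R (x i)).subtype ∘ₗ f, rfl⟩)
  obtain ⟨r, hr, hra⟩ := ha
  have hraP : r • a ∈ P := Submodule.span_le.mpr (Set.range_subset_iff.mpr hxP) hra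
  obtain ⟨⟨u, hu⟩, hua⟩ := (Submodule.mem_torsion_iff _).mp hraP
  rw [Submonoid.mk_smul, ← map_smul, Submodule.mkQ_apply, Submodule.Quotient.mk_eq_zero,
    smul_smul] at hua
  obtain ⟨F, hF⟩ := hua
  exact ⟨F, u * r, mul_ne_zero (nonZeroDivisors.ne_zero hu) hr, hF⟩

end

theorem stmt9_general (R : Type*) [CommRing R] [IsDomain R]
    (A : Type*) [AddCommGroup A] [Module R A] [NoZeroSMulDivisors R A]
    (n : ℕ) (x : Fin n → A)
    (hmax : ∀ a : A, ∃ r : R, r ≠ 0 ∧ r • a ∈ Submodule.span R (Set.range x))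
    (T : Submodule R (FractionRing R)) (hT : T ≠ ⊥)
    (hlb : ∀ i, ∃ f : T →ₗ[R] (pureGen R (x i)), Function.Injective f)
    (a : A) (ha : a ≠ 0) :
    ∃ f : T →ₗ[R] (pureGen R a), Function.Injective f := by
  have : Nontrivial T := Submodule.nontrivial_iff_ne_bot.mpr hT
  obtain ⟨t₀, ht₀⟩ := exists_ne (0 : T)
  obtain ⟨F, m, hm, hF⟩ := exists_linearMap_apply_eq_smul ht₀ x hlb (hmax a)
  have hF_mem : F t₀ ∈ pureGen R a := ⟨1, one_ne_zero, m, by rw [one_smul, hF]⟩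
  have hF_inj : Function.Injective F :=
    F.injective_of_apply_ne_zero_s9 (hF ▸ smul_ne_zero hm ha)
  exact ⟨F.codRestrict _ (F.apply_mem_pureGen ht₀ hF_mem),
    fun _ _ h ↦ hF_inj (congrArg Subtype.val h)⟩

/-- For a nonzero element `a` of a finite rank torsion-free
module `A` over a Dedekind domain, `IT(A) ≤ type(a)`.  Here `x : Fin n → A` is a
maximal linearly independent system, and `T` is a rank-1 module realizing
`IT(A) = inf_i type(⟨x i⟩_*)`: it embeds into each `⟨x i⟩_*` and every rank-1
module embedding into all `⟨x i⟩_*` embeds into `T`.  The conclusion is that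
`T` embeds into `⟨a⟩_*`. -/
theorem stmt9 (R : Type*) [CommRing R] [IsDomain R] [IsDedekindDomain R]
    (A : Type*) [AddCommGroup A] [Module R A] [NoZeroSMulDivisors R A]
    (hfin : Module.rank R A < Cardinal.aleph0)
    (n : ℕ) (x : Fin n → A) (hli : LinearIndependent R x)
    (hmax : ∀ a : A, ∃ r : R, r ≠ 0 ∧ r • a ∈ Submodule.span R (Set.range x))
    (T : Submodule R (FractionRing R)) (hT : T ≠ ⊥)
    (hlb : ∀ i, ∃ f : T →ₗ[R] (pureGen R (x i)), Function.Injective f)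
    (hglb : ∀ D : Submodule R (FractionRing R), D ≠ ⊥ →
      (∀ i, ∃ f : D →ₗ[R] (pureGen R (x i)), Function.Injective f) →
      ∃ g : D →ₗ[R] T, Function.Injective g)
    (a : A) (ha : a ≠ 0) :
    ∃ f : T →ₗ[R] (pureGen R a), Function.Injective f :=
  stmt9_general R A n x hmax T hT hlb a ha
end

section
/- Two nonzero subgroups A and B of the rationals ℚ have the same type (i.e. are isomorphic as abelian groups) if and only if there exists a nonzero rational q with A = qB. -/
/-!
Any two rationals are commensurable: `m • x = n • a` for integers `m ≠ 0`, `n`. Applying an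
additive map `f` on a subgroup of `ℚ` and cancelling `m` gives `f x * a = f a * x`, so `f` is
multiplication by the constant `f a / a`. Hence an isomorphism `B ≃+ A` is multiplication by a
nonzero rational, which carries `B` onto `A`.
-/

namespace Rat

theorem exists_zsmul_eq_zsmul (x : ℚ) {a : ℚ} (ha : a ≠ 0) :
    ∃ m n : ℤ, m ≠ 0 ∧ m • x = n • a := by
  refine ⟨a.num * x.den, x.num * a.den,
    mul_ne_zero (num_ne_zero.mpr ha) (Int.natCast_ne_zero.mpr x.den_nz), ?_⟩
  simp only [zsmul_eq_mul, Int.cast_mul, Int.cast_natCast]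
  rw [mul_assoc, mul_comm (x.den : ℚ), mul_den_eq_num, mul_assoc, mul_comm (a.den : ℚ),
    mul_den_eq_num, mul_comm]

theorem addSubgroup_hom_apply_mul_comm {A : AddSubgroup ℚ} (f : A →+ ℚ) (x a : A) :
    f x * a = f a * x := by
  rcases eq_or_ne (a : ℚ) 0 with ha | ha
  · rw [show a = 0 from Subtype.ext ha, map_zero, ZeroMemClass.coe_zero, mul_zero, zero_mul]
  obtain ⟨m, n, hm, hmn⟩ := exists_zsmul_eq_zsmul (x : ℚ) ha
  have hf : m • f x = n • f a := by
    have hmn' : m • x = n • a := Subtype.ext (by simpa only [AddSubgroup.coe_zsmul] using hmn)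
    rw [← map_zsmul, ← map_zsmul, hmn']
  simp only [zsmul_eq_mul] at hmn hf
  refine mul_left_cancel₀ (Int.cast_ne_zero.mpr hm) ?_
  calc (m : ℚ) * (f x * a) = n * f a * a := by rw [← mul_assoc, hf]
    _ = f a * (m * x) := by rw [hmn]; ring
    _ = m * (f a * x) := by ring

theorem addSubgroup_hom_exists_eq_mul {A : AddSubgroup ℚ} (f : A →+ ℚ)
    (hf : Function.Injective f) : ∃ c : ℚ, c ≠ 0 ∧ ∀ x : A, f x = c * x := by
  rcases eq_or_ne A ⊥ with hA | hA
  · refine ⟨1, one_ne_zero, fun x => ?_⟩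
    have hx : x = 0 := Subtype.ext ((AddSubgroup.mem_bot).mp (hA ▸ x.2))
    rw [hx, map_zero, ZeroMemClass.coe_zero, mul_zero]
  obtain ⟨a, ha⟩ := AddSubgroup.ne_bot_iff_exists_ne_zero.mp hA
  have ha' : (a : ℚ) ≠ 0 := fun h => ha (Subtype.ext h)
  refine ⟨f a / a, div_ne_zero (fun h => ha (hf (h.trans (map_zero f).symm))) ha', fun x => ?_⟩
  rw [div_mul_eq_mul_div, ← addSubgroup_hom_apply_mul_comm, mul_div_cancel_right₀ _ ha']

theorem addSubgroup_eq_mul_image_of_addEquiv {A B : AddSubgroup ℚ} (e : B ≃+ A) :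
    ∃ q : ℚ, q ≠ 0 ∧ (A : Set ℚ) = (fun x => q * x) '' (B : Set ℚ) := by
  obtain ⟨q, hq, he⟩ := addSubgroup_hom_exists_eq_mul (A.subtype.comp e.toAddMonoidHom)
    (A.subtype_injective.comp e.injective)
  refine ⟨q, hq, Set.ext fun x => ⟨fun hx => ?_, ?_⟩⟩
  · obtain ⟨y, hy⟩ := e.surjective ⟨x, hx⟩
    exact ⟨y, y.2, (he y).symm.trans (congrArg Subtype.val hy)⟩
  · rintro ⟨y, hy, rfl⟩
    have hA := (e ⟨y, hy⟩).2
    rwa [show ((e ⟨y, hy⟩ : A) : ℚ) = q * y from he ⟨y, hy⟩] at hA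

theorem addSubgroup_eq_map_mulLeft {A B : AddSubgroup ℚ} {q : ℚ}
    (h : (A : Set ℚ) = (fun x => q * x) '' (B : Set ℚ)) :
    A = B.map (AddMonoidHom.mulLeft q) :=
  SetLike.coe_injective (h.trans (AddSubgroup.coe_map (AddMonoidHom.mulLeft q) B).symm)

end Rat

theorem stmt10_general (A B : AddSubgroup ℚ) :
    Nonempty (A ≃+ B) ↔ ∃ q : ℚ, q ≠ 0 ∧ (A : Set ℚ) = (fun x => q * x) '' (B : Set ℚ) := by
  constructor
  · rintro ⟨e⟩
    exact Rat.addSubgroup_eq_mul_image_of_addEquiv e.symm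
  · rintro ⟨q, hq, h⟩
    have hmul : Function.Injective (AddMonoidHom.mulLeft q) := mul_right_injective₀ hq
    exact ⟨((AddSubgroup.equivMapOfInjective B _ hmul).trans
      (AddEquiv.addSubgroupCongr (Rat.addSubgroup_eq_map_mulLeft h).symm)).symm⟩

/-- Two nonzero subgroups `A, B` of `ℚ` have the same type
(i.e. are isomorphic as abelian groups) iff `A = q B` for some nonzero rational
`q`. -/
theorem stmt10 (A B : AddSubgroup ℚ) (hA : A ≠ ⊥) (hB : B ≠ ⊥) :
    Nonempty (A ≃+ B) ↔ ∃ q : ℚ, q ≠ 0 ∧ (A : Set ℚ) = (fun x => q * x) '' (B : Set ℚ) :=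
  stmt10_general A B
end

section
/- Let (τ_k)_{k∈ℤ} be a strictly increasing chain of types, and let G = ⊕_{k∈ℤ} G_k where each G_k is an indecomposable torsion-free abelian group of rank 2, homogeneous of type τ_k, with endomorphism ring in which every nonzero endomorphism is injective. Then G has no direct summand of rank 1. -/
universe u

section PureGen

variable {R M N : Type*} [CommRing R] [IsDomain R] [AddCommGroup M] [Module R M]
  [AddCommGroup N] [Module R N]

theorem pureGen_le_comap (f : M →ₗ[R] N) (a : M) : pureGen R a ≤ (pureGen R (f a)).comap f :=
  fun _ ⟨r, hr, s, hx⟩ => ⟨r, hr, s, by rw [← map_smul, hx, map_smul]⟩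

theorem eq_zero_of_mem_pureGen_of_map_eq_zero [NoZeroSMulDivisors R M] [NoZeroSMulDivisors R N]
    {f : M →ₗ[R] N} {a x : M} (hfa : f a ≠ 0) (hx : x ∈ pureGen R a) (hfx : f x = 0) : x = 0 := by
  obtain ⟨r, hr, s, hrs⟩ := hx
  have hs : s = 0 := by
    have := congrArg f hrs
    rw [map_smul, map_smul, hfx, smul_zero, eq_comm] at this
    exact (smul_eq_zero.mp this).resolve_right hfa
  rw [hs, zero_smul] at hrs
  exact (smul_eq_zero.mp hrs).resolve_left hr

theorem LinearMap.eq_zero_of_not_exists_injective_pureGen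
    [NoZeroSMulDivisors R M] [NoZeroSMulDivisors R N]
    (h : ∀ (x : M) (y : N), x ≠ 0 → y ≠ 0 →
      ¬ ∃ g : pureGen R x →+ pureGen R y, Function.Injective g)
    (f : M →ₗ[R] N) : f = 0 := by
  ext x
  by_contra hfx
  refine h x (f x) (ne_of_apply_ne f (by rwa [map_zero])) hfx
    ⟨(f.restrict (pureGen_le_comap f x)).toAddMonoidHom, ?_⟩
  refine (injective_iff_map_eq_zero _).mpr fun y hy => Subtype.ext ?_
  exact eq_zero_of_mem_pureGen_of_map_eq_zero hfx y.2 (congrArg Subtype.val hy)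

end PureGen

theorem DFinsupp.map_eq_map_single {ι R N : Type*} {β : ι → Type*} [DecidableEq ι] [Semiring R]
    [∀ i, AddCommMonoid (β i)] [∀ i, Module R (β i)] [AddCommMonoid N] [Module R N]
    (F : (Π₀ i, β i) →ₗ[R] N) (a : Π₀ i, β i) (m : ι)
    (h : ∀ k, k ≠ m → F (DFinsupp.single k (a k)) = 0) : F a = F (DFinsupp.single m (a m)) := by
  classical
  conv_lhs => rw [← DFinsupp.sum_single (f := a), DFinsupp.sum, map_sum]
  refine Finset.sum_eq_single m (fun k _ hk => h k hk) fun hm => ?_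
  rw [DFinsupp.notMem_support_iff.mp hm, DFinsupp.single_zero, map_zero]

theorem exists_injective_of_le {X : ℤ → Type*} [∀ k, AddZeroClass (X k)]
    (h : ∀ k, ∃ f : X k →+ X (k + 1), Function.Injective f) {j k : ℤ} (hjk : j ≤ k) :
    ∃ f : X j →+ X k, Function.Injective f := by
  induction k, hjk using Int.leInduction with
  | base => exact ⟨AddMonoidHom.id _, Function.injective_id⟩
  | succ n _ ih =>
    obtain ⟨f, hf⟩ := ih
    obtain ⟨g, hg⟩ := h n
    exact ⟨g.comp f, hg.comp hf⟩

theorem not_exists_injective_of_lt {X : ℤ → Type*} [∀ k, AddZeroClass (X k)]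
    (hchain : ∀ k, ∃ f : X k →+ X (k + 1), Function.Injective f)
    (hstrict : ∀ k, ¬ ∃ f : X (k + 1) →+ X k, Function.Injective f) {j k : ℤ} (hjk : j < k) :
    ¬ ∃ f : X k →+ X j, Function.Injective f := by
  rintro ⟨f, hf⟩
  obtain ⟨g, hg⟩ := exists_injective_of_le hchain (Int.add_one_le_of_lt hjk)
  exact hstrict j ⟨f.comp g, hf.comp hg⟩

theorem linearMap_eq_zero_of_lt {G : ℤ → Type*} [∀ k, AddCommGroup (G k)]
    [∀ k, NoZeroSMulDivisors ℤ (G k)] {T : ℤ → AddSubgroup ℚ}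
    (hchain : ∀ k, ∃ f : T k →+ T (k + 1), Function.Injective f)
    (hstrict : ∀ k, ¬ ∃ f : T (k + 1) →+ T k, Function.Injective f)
    (hhomog : ∀ k, ∀ g : G k, g ≠ 0 → Nonempty ((pureGen ℤ g) ≃+ T k))
    {m k : ℤ} (hmk : m < k) (f : G k →ₗ[ℤ] G m) : f = 0 := by
  refine f.eq_zero_of_not_exists_injective_pureGen fun x y hx hy ⟨g, hg⟩ => ?_
  obtain ⟨ex⟩ := hhomog k x hx
  obtain ⟨ey⟩ := hhomog m y hy
  exact not_exists_injective_of_lt (X := fun k => T k) hchain hstrict hmk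
    ⟨ey.toAddMonoidHom.comp (g.comp ex.symm.toAddMonoidHom),
      ey.injective.comp (hg.comp ex.symm.injective)⟩

theorem stmt16_general (G : ℤ → Type u) [∀ k, AddCommGroup (G k)]
    [∀ k, NoZeroSMulDivisors ℤ (G k)]
    (T : ℤ → AddSubgroup ℚ)
    (hchain : ∀ k, ∃ f : T k →+ T (k + 1), Function.Injective f)
    (hstrict : ∀ k, ¬ ∃ f : T (k + 1) →+ T k, Function.Injective f)
    (hrk : ∀ k, Module.rank ℤ (G k) = 2)
    (hhomog : ∀ k, ∀ g : G k, g ≠ 0 → Nonempty ((pureGen ℤ g) ≃+ T k))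
    (hendo : ∀ k, ∀ f : G k →ₗ[ℤ] G k, f ≠ 0 → Function.Injective f) :
    ¬ ∃ A B : Submodule ℤ (Π₀ k, G k), IsCompl A B ∧ Module.rank ℤ A = 1 := by
  classical
  rintro ⟨A, B, hAB, hrkA⟩
  obtain ⟨a, ha⟩ : ∃ a : A, a ≠ 0 := by
    rw [← rank_pos_iff_exists_ne_zero (R := ℤ), hrkA]
    exact zero_lt_one
  have hsupp : (a : Π₀ k, G k).support.Nonempty :=
    Finset.nonempty_iff_ne_empty.mpr (DFinsupp.support_eq_empty.not.mpr (by simpa using ha))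
  set m := (a : Π₀ k, G k).support.min' hsupp
  have ham : (a : Π₀ k, G k) m ≠ 0 := DFinsupp.mem_support_iff.mp (Finset.min'_mem _ hsupp)
  let p : A →ₗ[ℤ] G m := DFinsupp.lapply m ∘ₗ A.subtype
  let π := A.projectionOnto B hAB
  have hpπ : (p ∘ₗ π) (DFinsupp.single m ((a : Π₀ k, G k) m)) = (a : Π₀ k, G k) m := by
    rw [← DFinsupp.map_eq_map_single]
    · simp [p, π, Submodule.projectionOnto_apply_left]
    intro k hk
    rcases lt_or_gt_of_ne hk with hkm | hmk
    · rw [DFinsupp.notMem_support_iff.mp fun h => (Finset.min'_le _ k h).not_gt hkm,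
        DFinsupp.single_zero, map_zero]
    · exact LinearMap.congr_fun (linearMap_eq_zero_of_lt hchain hstrict hhomog hmk
        (p ∘ₗ π ∘ₗ DFinsupp.lsingle k)) _
  have hψ : Function.Injective (p ∘ₗ π ∘ₗ DFinsupp.lsingle m) :=
    hendo m _ fun h => ham (by rw [← hpπ]; exact LinearMap.congr_fun h _)
  have h2 := (π ∘ₗ DFinsupp.lsingle m).rank_le_of_injective
    (Function.Injective.of_comp (f := p) hψ)
  rw [hrk m, hrkA] at h2
  norm_num at h2

/-- Let `(τ_k)_{k ∈ ℤ}` be a strictly increasing chain of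
types (represented by rank-1 subgroups `T k ≤ ℚ`) and `G = ⊕_{k ∈ ℤ} G k`, where
each `G k` is an indecomposable torsion-free group of rank `2`, homogeneous of
type `τ_k`, all of whose nonzero endomorphisms are injective.  Then `G` has no
rank-1 direct summand. -/
theorem stmt16 (G : ℤ → Type u) [∀ k, AddCommGroup (G k)]
    [∀ k, NoZeroSMulDivisors ℤ (G k)]
    (T : ℤ → AddSubgroup ℚ) (hT0 : ∀ k, T k ≠ ⊥)
    (hchain : ∀ k, ∃ f : T k →+ T (k + 1), Function.Injective f)
    (hstrict : ∀ k, ¬ ∃ f : T (k + 1) →+ T k, Function.Injective f)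
    (hrk : ∀ k, Module.rank ℤ (G k) = 2)
    (hindec : ∀ k, ∀ U V : Submodule ℤ (G k), IsCompl U V → U = ⊥ ∨ V = ⊥)
    (hhomog : ∀ k, ∀ g : G k, g ≠ 0 → Nonempty ((pureGen ℤ g) ≃+ T k))
    (hendo : ∀ k, ∀ f : G k →ₗ[ℤ] G k, f ≠ 0 → Function.Injective f) :
    ¬ ∃ A B : Submodule ℤ (Π₀ k, G k), IsCompl A B ∧ Module.rank ℤ A = 1 :=
  stmt16_general G T hchain hstrict hrk hhomog hendo
end
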